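/- arXiv:math/9712210 — 4 statements merged into one kernel-verified Lean document; each statement's English description precedes it below -/
import Mathlib

section
/- Let φ be an isometry of an ℝ-tree T onto itself. Then the infimum ℓ(φ) = inf_{x ∈ T} d(x, φ(x)) is attained: there exists x ∈ T with d(x, φ(x)) = ℓ(φ). -/
/-- An *arc* from `x` to `y` in a metric space: the image of a topological embedding of a
closed real interval `[a,b]` (with `a = b` allowed) sending `a` to `x` and `b` to `y`.
Since `[a,b]` is compact and a metric space is Hausdorff, a topological embedding is the
same as a continuous injective map. -/
def IsArcIn {T : Type*} [MetricSpace T] (x y : T) (S : Set T) : Prop :=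
  ∃ a b : ℝ, a ≤ b ∧ ∃ α : ℝ → T,
    ContinuousOn α (Set.Icc a b) ∧ Set.InjOn α (Set.Icc a b) ∧
    α '' Set.Icc a b = S ∧ α a = x ∧ α b = y

/-- A *geodesic segment* from `x` to `y`: the image of an isometric embedding of a closed
real interval sending the endpoints to `x` and `y`. -/
def IsGeodesicSegmentIn {T : Type*} [MetricSpace T] (x y : T) (S : Set T) : Prop :=
  ∃ a b : ℝ, a ≤ b ∧ ∃ α : ℝ → T,
    (∀ s ∈ Set.Icc a b, ∀ t ∈ Set.Icc a b, dist (α s) (α t) = |s - t|) ∧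
    α '' Set.Icc a b = S ∧ α a = x ∧ α b = y

/-- An ℝ-tree: a metric space in which any two points are joined by a unique arc,
and this arc is a geodesic segment. -/
def IsRTree (T : Type*) [MetricSpace T] : Prop :=
  ∀ x y : T, (∃! S : Set T, IsArcIn x y S) ∧
    ∀ S : Set T, IsArcIn x y S → IsGeodesicSegmentIn x y S

/-- The Gromov product `(x·y)_w = (d(w,x) + d(w,y) − d(x,y))/2`. -/
noncomputable def gromovProd {T : Type*} [MetricSpace T] (w x y : T) : ℝ :=
  (dist w x + dist w y - dist x y) / 2

/-- The translation length `ℓ(φ) = inf_{x ∈ T} d(x, φ(x))` of a self-map of a metric space. -/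
noncomputable def translationLength {T : Type*} [MetricSpace T] (φ : T → T) : ℝ :=
  ⨅ x : T, dist x (φ x)

open Set

section Aux
variable {T : Type*} [MetricSpace T]

lemma gromovProd_nonneg (w x y : T) : 0 ≤ gromovProd w x y := by
  have h := dist_triangle x w y
  rw [dist_comm x w] at h
  unfold gromovProd; linarith

lemma contOn_of_dist_le {α : ℝ → T} {s : Set ℝ}
    (h : ∀ u ∈ s, ∀ v ∈ s, dist (α u) (α v) ≤ |u - v|) : ContinuousOn α s := by
  have : LipschitzOnWith 1 α s := by
    apply LipschitzOnWith.of_dist_le_mul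
    intro u hu v hv
    simpa [Real.dist_eq] using h u hu v hv
  exact this.continuousOn

/-- Two geodesics issuing from a common point `w` in an ℝ-tree agree up to the Gromov
product `k = (y·z)_w`, and beyond it the distance is `dist (α s) (β t) = s + t - 2k`. -/
lemma geo_pair (h : IsRTree T) {w y z : T} {L1 L2 : ℝ} {α β : ℝ → T}
    (hL1 : dist w y = L1) (hL2 : dist w z = L2)
    (hα : ∀ s ∈ Icc (0:ℝ) L1, ∀ t ∈ Icc (0:ℝ) L1, dist (α s) (α t) = |s - t|)
    (hα0 : α 0 = w) (hαL : α L1 = y)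
    (hβ : ∀ s ∈ Icc (0:ℝ) L2, ∀ t ∈ Icc (0:ℝ) L2, dist (β s) (β t) = |s - t|)
    (hβ0 : β 0 = w) (hβL : β L2 = z) :
    0 ≤ gromovProd w y z ∧ gromovProd w y z ≤ L1 ∧ gromovProd w y z ≤ L2 ∧
    (∀ t, 0 ≤ t → t ≤ gromovProd w y z → α t = β t) ∧
    (∀ s t, gromovProd w y z ≤ s → s ≤ L1 → gromovProd w y z ≤ t → t ≤ L2 →
      dist (α s) (β t) = s + t - 2 * gromovProd w y z) := by
  have hL1n : 0 ≤ L1 := hL1 ▸ dist_nonneg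
  have hL2n : 0 ≤ L2 := hL2 ▸ dist_nonneg
  have dwα : ∀ s ∈ Icc (0:ℝ) L1, dist w (α s) = s := by
    intro s hs
    rw [← hα0, hα 0 ⟨le_refl 0, hL1n⟩ s hs, zero_sub, abs_neg, abs_of_nonneg hs.1]
  have dwβ : ∀ s ∈ Icc (0:ℝ) L2, dist w (β s) = s := by
    intro s hs
    rw [← hβ0, hβ 0 ⟨le_refl 0, hL2n⟩ s hs, zero_sub, abs_neg, abs_of_nonneg hs.1]
  set A : Set ℝ := {t : ℝ | t ∈ Icc (0:ℝ) (min L1 L2) ∧ α t = β t} with hA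
  have hA0 : (0:ℝ) ∈ A := ⟨⟨le_refl 0, le_min hL1n hL2n⟩, by rw [hα0, hβ0]⟩
  have hAbdd : BddAbove A := ⟨min L1 L2, fun t ht => ht.1.2⟩
  set k : ℝ := sSup A with hkdef
  have hk0 : 0 ≤ k := le_csSup hAbdd hA0
  have hkmin : k ≤ min L1 L2 := csSup_le ⟨0, hA0⟩ fun t ht => ht.1.2
  have hk1 : k ≤ L1 := hkmin.trans (min_le_left _ _)
  have hk2 : k ≤ L2 := hkmin.trans (min_le_right _ _)
  have heq : α k = β k := by
    by_contra hne
    have hd : 0 < dist (α k) (β k) := dist_pos.mpr hne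
    obtain ⟨t, htA, ht⟩ := exists_lt_of_lt_csSup ⟨0, hA0⟩
      (show k - dist (α k) (β k) / 4 < k by linarith)
    have htle : t ≤ k := le_csSup hAbdd htA
    have ht1 : t ∈ Icc (0:ℝ) L1 := ⟨htA.1.1, htA.1.2.trans (min_le_left _ _)⟩
    have ht2 : t ∈ Icc (0:ℝ) L2 := ⟨htA.1.1, htA.1.2.trans (min_le_right _ _)⟩
    have e1 : dist (α k) (α t) = |k - t| := hα k ⟨hk0, hk1⟩ t ht1
    have e2 : dist (β t) (β k) = |t - k| := hβ t ht2 k ⟨hk0, hk2⟩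
    have tri := dist_triangle4 (α k) (α t) (β t) (β k)
    rw [e1, e2] at tri
    rw [htA.2, dist_self] at tri
    rw [abs_of_nonneg (by linarith), abs_of_nonpos (by linarith)] at tri
    linarith
  set M : ℝ := L1 + L2 - 2 * k with hMdef
  have hM0 : 0 ≤ M := by simp only [hMdef]; linarith
  obtain ⟨γ, hγ1, hγ2⟩ : ∃ γ : ℝ → T, (∀ u, u ≤ L1 - k → γ u = α (L1 - u)) ∧
      (∀ u, ¬u ≤ L1 - k → γ u = β (u - (L1 - k) + k)) :=
    ⟨fun u => if u ≤ L1 - k then α (L1 - u) else β (u - (L1 - k) + k),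
      fun u hu => if_pos hu, fun u hu => if_neg hu⟩
  have hγβ : ∀ u, L1 - k ≤ u → γ u = β (u - (L1 - k) + k) := by
    intro u hu
    rcases eq_or_lt_of_le hu with huu | hlt
    · rw [← huu, hγ1 _ (le_refl _)]
      have e1 : L1 - (L1 - k) = k := by ring
      have e2 : L1 - k - (L1 - k) + k = k := by ring
      rw [e1, e2]; exact heq
    · exact hγ2 _ (not_le.mpr hlt)
  have harg1 : ∀ u, 0 ≤ u → u ≤ L1 - k → L1 - u ∈ Icc (0:ℝ) L1 :=
    fun u h1 h2 => ⟨by linarith, by linarith⟩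
  have harg2 : ∀ u, L1 - k ≤ u → u ≤ M → u - (L1 - k) + k ∈ Icc (0:ℝ) L2 :=
    fun u h1 h2 => ⟨by linarith, by simp only [hMdef] at h2; linarith⟩
  have hγ0 : γ 0 = y := by rw [hγ1 0 (by linarith), sub_zero, hαL]
  have hγM : γ M = z := by
    rw [hγβ M (by simp only [hMdef]; linarith)]
    have e : M - (L1 - k) + k = L2 := by simp only [hMdef]; ring
    rw [e, hβL]
  -- the concatenation is 1-Lipschitz
  have hlipkey : ∀ u v, u ∈ Icc (0:ℝ) M → v ∈ Icc (0:ℝ) M → u ≤ v →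
      dist (γ u) (γ v) ≤ v - u := by
    intro u v hu hv huv
    by_cases hu' : u ≤ L1 - k <;> by_cases hv' : v ≤ L1 - k
    · rw [hγ1 u hu', hγ1 v hv', hα _ (harg1 u hu.1 hu') _ (harg1 v hv.1 hv')]
      rw [show L1 - u - (L1 - v) = v - u by ring, abs_of_nonneg (by linarith)]
    · have tri := dist_triangle (γ u) (α k) (γ v)
      have e1 : dist (γ u) (α k) = L1 - k - u := by
        rw [hγ1 u hu', hα _ (harg1 u hu.1 hu') _ ⟨hk0, hk1⟩,
          abs_of_nonneg (by linarith)]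
        ring
      have e2 : dist (α k) (γ v) = v - (L1 - k) := by
        rw [heq, hγβ v (le_of_not_ge hv'),
          hβ _ ⟨hk0, hk2⟩ _ (harg2 v (le_of_not_ge hv') hv.2),
          abs_of_nonpos (by linarith), neg_sub]
        ring
      linarith
    · exact absurd (huv.trans hv') hu'
    · rw [hγ2 u hu', hγ2 v hv',
        hβ _ (harg2 u (le_of_not_ge hu') hu.2) _ (harg2 v (le_of_not_ge hv') hv.2),
        abs_of_nonpos (by linarith), neg_sub]
      linarith
  have hlip : ∀ u ∈ Icc (0:ℝ) M, ∀ v ∈ Icc (0:ℝ) M, dist (γ u) (γ v) ≤ |u - v| := by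
    intro u hu v hv
    rcases le_total u v with huv | huv
    · rw [abs_of_nonpos (by linarith), neg_sub]; exact hlipkey u v hu hv huv
    · rw [abs_of_nonneg (by linarith), dist_comm]; exact hlipkey v u hv hu huv
  -- injectivity
  have himp : ∀ u v, u ∈ Icc (0:ℝ) M → v ∈ Icc (0:ℝ) M → u ≤ L1 - k → ¬v ≤ L1 - k →
      γ u ≠ γ v := by
    intro u v hu hv hu' hv' hguv
    have hv'' : L1 - k < v := not_le.mp hv'
    set tv : ℝ := v - (L1 - k) + k with htvdef
    have htv2 : tv ∈ Icc (0:ℝ) L2 := harg2 v (le_of_lt hv'') hv.2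
    have d1 : dist w (γ u) = L1 - u := by rw [hγ1 u hu']; exact dwα _ (harg1 u hu.1 hu')
    have d2 : dist w (γ v) = tv := by rw [hγ2 v hv']; exact dwβ _ htv2
    have htveq : L1 - u = tv := by rw [← d1, ← d2, hguv]
    have htvA : tv ∈ A := by
      refine ⟨⟨htv2.1, le_min (by simp only [htvdef]; linarith [hu.1]) htv2.2⟩, ?_⟩
      have : α tv = γ u := by rw [hγ1 u hu']; rw [htveq]
      rw [this, hguv, hγ2 v hv']
    have : tv ≤ k := le_csSup hAbdd htvA
    simp only [htvdef] at this; linarith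
  have hinj : InjOn γ (Icc (0:ℝ) M) := by
    intro u hu v hv hguv
    by_cases hu' : u ≤ L1 - k <;> by_cases hv' : v ≤ L1 - k
    · have := hα _ (harg1 u hu.1 hu') _ (harg1 v hv.1 hv')
      rw [← hγ1 u hu', ← hγ1 v hv', hguv, dist_self] at this
      have := (abs_eq_zero.mp this.symm)
      linarith
    · exact absurd hguv (himp u v hu hv hu' hv')
    · exact absurd hguv.symm (himp v u hv hu hv' hu')
    · have := hβ _ (harg2 u (le_of_not_ge hu') hu.2) _ (harg2 v (le_of_not_ge hv') hv.2)
      rw [← hγ2 u hu', ← hγ2 v hv', hguv, dist_self] at this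
      have := (abs_eq_zero.mp this.symm)
      linarith
  have harc : IsArcIn y z (γ '' Icc 0 M) :=
    ⟨0, M, hM0, γ, contOn_of_dist_le hlip, hinj, rfl, hγ0, hγM⟩
  obtain ⟨a, b, hab, δ, hδ, hδim, hδa, hδb⟩ := (h y z).2 _ harc
  have hyz : dist y z = b - a := by
    rw [← hδa, ← hδb, hδ a ⟨le_refl a, hab⟩ b ⟨hab, le_refl b⟩, abs_sub_comm,
      abs_of_nonneg (by linarith)]
  have hyδ : ∀ s ∈ Icc a b, dist y (δ s) = s - a := by
    intro s hs
    rw [← hδa, hδ a ⟨le_refl a, hab⟩ s hs, abs_sub_comm, abs_of_nonneg (by linarith [hs.1])]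
  have hδz : ∀ s ∈ Icc a b, dist (δ s) z = b - s := by
    intro s hs
    rw [← hδb, hδ s hs b ⟨hab, le_refl b⟩, abs_sub_comm, abs_of_nonneg (by linarith [hs.2])]
  have key3 : ∀ p ∈ γ '' Icc (0:ℝ) M, dist y p + dist p z = dist y z := by
    intro p hp
    rw [← hδim] at hp
    obtain ⟨s, hs, rfl⟩ := hp
    rw [hyδ s hs, hδz s hs, hyz]; ring
  have key2 : ∀ p ∈ γ '' Icc (0:ℝ) M, ∀ q ∈ γ '' Icc (0:ℝ) M,
      dist p q = |dist y p - dist y q| := by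
    intro p hp q hq
    rw [← hδim] at hp hq
    obtain ⟨s, hs, rfl⟩ := hp
    obtain ⟨t, ht, rfl⟩ := hq
    rw [hyδ s hs, hyδ t ht, hδ s hs t ht]
    congr 1; ring
  have hcmem : α k ∈ γ '' Icc (0:ℝ) M := by
    refine ⟨L1 - k, ⟨by linarith, by simp only [hMdef]; linarith⟩, ?_⟩
    rw [hγ1 _ (le_refl _)]; congr 1; ring
  have h1 : dist y (α k) = L1 - k := by
    rw [← hαL, hα L1 ⟨hL1n, le_refl L1⟩ k ⟨hk0, hk1⟩, abs_of_nonneg (by linarith)]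
  have h2 : dist (α k) z = L2 - k := by
    rw [heq, ← hβL, hβ k ⟨hk0, hk2⟩ L2 ⟨hL2n, le_refl L2⟩, abs_of_nonpos (by linarith),
      neg_sub]
  have hMval : dist y z = M := by
    have := key3 _ hcmem
    rw [h1, h2] at this
    simp only [hMdef]; linarith
  have hgp : gromovProd w y z = k := by
    unfold gromovProd
    rw [hL1, hL2, hMval]; simp only [hMdef]; ring
  rw [hgp]
  refine ⟨hk0, hk1, hk2, ?_, ?_⟩
  · -- agreement up to k
    intro t h0t htk
    have contα : ContinuousOn α (Icc 0 k) := by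
      apply contOn_of_dist_le
      intro u hu v hv
      exact le_of_eq (hα u ⟨hu.1, hu.2.trans hk1⟩ v ⟨hv.1, hv.2.trans hk1⟩)
    have injα : InjOn α (Icc 0 k) := by
      intro u hu v hv huv
      have := hα u ⟨hu.1, hu.2.trans hk1⟩ v ⟨hv.1, hv.2.trans hk1⟩
      rw [huv, dist_self] at this
      have := abs_eq_zero.mp this.symm; linarith
    have contβ : ContinuousOn β (Icc 0 k) := by
      apply contOn_of_dist_le
      intro u hu v hv
      exact le_of_eq (hβ u ⟨hu.1, hu.2.trans hk2⟩ v ⟨hv.1, hv.2.trans hk2⟩)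
    have injβ : InjOn β (Icc 0 k) := by
      intro u hu v hv huv
      have := hβ u ⟨hu.1, hu.2.trans hk2⟩ v ⟨hv.1, hv.2.trans hk2⟩
      rw [huv, dist_self] at this
      have := abs_eq_zero.mp this.symm; linarith
    have arc1 : IsArcIn w (α k) (α '' Icc 0 k) := ⟨0, k, hk0, α, contα, injα, rfl, hα0, rfl⟩
    have arc2 : IsArcIn w (α k) (β '' Icc 0 k) :=
      ⟨0, k, hk0, β, contβ, injβ, rfl, hβ0, heq.symm⟩
    obtain ⟨S₀, hS₀, huniq⟩ := (h w (α k)).1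
    have him : α '' Icc 0 k = β '' Icc 0 k := (huniq _ arc1).trans (huniq _ arc2).symm
    have : β t ∈ α '' Icc 0 k := by rw [him]; exact ⟨t, ⟨h0t, htk⟩, rfl⟩
    obtain ⟨s, hs, hst⟩ := this
    have hsIcc : s ∈ Icc (0:ℝ) L1 := ⟨hs.1, hs.2.trans hk1⟩
    have htIcc : t ∈ Icc (0:ℝ) L2 := ⟨h0t, htk.trans hk2⟩
    have d1 := dwα s hsIcc
    have d2 := dwβ t htIcc
    rw [hst] at d1
    have hst' : s = t := d1.symm.trans d2
    rw [hst'] at hst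
    exact hst
  · -- distance formula beyond k
    intro s t hks hsL1 hkt htL2
    have hαsmem : α s ∈ γ '' Icc (0:ℝ) M := by
      refine ⟨L1 - s, ⟨by linarith, by simp only [hMdef]; linarith⟩, ?_⟩
      rw [hγ1 _ (by linarith)]; congr 1; ring
    have hβtmem : β t ∈ γ '' Icc (0:ℝ) M := by
      refine ⟨t - k + (L1 - k), ⟨by linarith, by simp only [hMdef]; linarith⟩, ?_⟩
      rw [hγβ _ (by linarith)]; congr 1; ring
    have dys : dist y (α s) = L1 - s := by
      rw [← hαL, hα L1 ⟨hL1n, le_refl L1⟩ s ⟨by linarith, hsL1⟩,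
        abs_of_nonneg (by linarith)]
    have dtz : dist (β t) z = L2 - t := by
      rw [← hβL, hβ t ⟨by linarith, htL2⟩ L2 ⟨hL2n, le_refl L2⟩,
        abs_of_nonpos (by linarith), neg_sub]
    have dyt : dist y (β t) = L1 + t - 2 * k := by
      have := key3 _ hβtmem
      rw [dtz, hMval] at this
      simp only [hMdef] at this; linarith
    rw [key2 _ hαsmem _ hβtmem, dys, dyt, abs_of_nonpos (by linarith)]
    ring

lemma exists_geo (h : IsRTree T) (x y : T) :
    ∃ α : ℝ → T,
      (∀ s ∈ Icc (0:ℝ) (dist x y), ∀ t ∈ Icc (0:ℝ) (dist x y),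
        dist (α s) (α t) = |s - t|) ∧ α 0 = x ∧ α (dist x y) = y := by
  obtain ⟨S, hS, -⟩ := (h x y).1
  obtain ⟨a, b, hab, δ, hiso, him, ha, hb⟩ := (h x y).2 S hS
  have hd : dist x y = b - a := by
    rw [← ha, ← hb, hiso a ⟨le_refl a, hab⟩ b ⟨hab, le_refl b⟩, abs_sub_comm,
      abs_of_nonneg (by linarith)]
  refine ⟨fun t => δ (a + t), ?_, ?_, ?_⟩
  · intro s hs t ht
    rw [hd] at hs ht
    have h1 : a + s ∈ Icc a b := ⟨by linarith [hs.1], by linarith [hs.2]⟩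
    have h2 : a + t ∈ Icc a b := ⟨by linarith [ht.1], by linarith [ht.2]⟩
    rw [hiso _ h1 _ h2]
    congr 1; ring
  · simpa using ha
  · rw [hd]
    show δ (a + (b - a)) = y
    have : a + (b - a) = b := by ring
    rw [this]; exact hb

/-- ℝ-trees are 0-hyperbolic. -/
lemma zero_hyp (h : IsRTree T) (w x y z : T) :
    min (gromovProd w x y) (gromovProd w y z) ≤ gromovProd w x z := by
  obtain ⟨α, hα, hα0, hαL⟩ := exists_geo h w x
  obtain ⟨β, hβ, hβ0, hβL⟩ := exists_geo h w y
  obtain ⟨γ, hγ, hγ0, hγL⟩ := exists_geo h w z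
  by_contra hcon
  push_neg at hcon
  set t := min (gromovProd w x y) (gromovProd w y z) with htdef
  have Mxy := geo_pair h rfl rfl hα hα0 hαL hβ hβ0 hβL
  have Myz := geo_pair h rfl rfl hβ hβ0 hβL hγ hγ0 hγL
  have Mxz := geo_pair h rfl rfl hα hα0 hαL hγ hγ0 hγL
  have ht0 : 0 ≤ t := le_min Mxy.1 Myz.1
  have h1 : α t = β t := Mxy.2.2.2.1 t ht0 (min_le_left _ _)
  have h2 : β t = γ t := Myz.2.2.2.1 t ht0 (min_le_right _ _)
  have htx : t ≤ dist w x := (min_le_left _ _).trans Mxy.2.1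
  have htz : t ≤ dist w z := (min_le_right _ _).trans Myz.2.2.1
  have h3 : dist (α t) (γ t) = t + t - 2 * gromovProd w x z :=
    Mxz.2.2.2.2 t t (le_of_lt hcon) htx (le_of_lt hcon) htz
  rw [h1, h2, dist_self] at h3
  linarith

lemma gromov_iso (φ : T ≃ᵢ T) (w x y : T) :
    gromovProd (φ w) (φ x) (φ y) = gromovProd w x y := by
  unfold gromovProd
  rw [φ.dist_eq, φ.dist_eq, φ.dist_eq]

lemma iter_dist (φ : T ≃ᵢ T) (n : ℕ) (x y : T) :
    dist ((⇑φ)^[n] x) ((⇑φ)^[n] y) = dist x y := by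
  induction n with
  | zero => simp
  | succ n ih =>
    rw [Function.iterate_succ_apply', Function.iterate_succ_apply', φ.dist_eq]
    exact ih

lemma iter_le (φ : T ≃ᵢ T) : ∀ (n : ℕ) (x : T), dist x ((⇑φ)^[n] x) ≤ n * dist x (φ x) := by
  intro n
  induction n with
  | zero => intro x; simp
  | succ n ih =>
    intro x
    have h1 : dist x ((⇑φ)^[n+1] x) ≤ dist x (φ x) + dist (φ x) ((⇑φ)^[n] (φ x)) := by
      rw [Function.iterate_succ_apply]
      exact dist_triangle _ _ _
    have h2 := ih (φ x)
    have h3 : dist (φ x) (φ (φ x)) = dist x (φ x) := φ.dist_eq x (φ x)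
    rw [h3] at h2
    push_cast
    linarith

end Aux

/-- For an isometry `φ` of an ℝ-tree onto itself, the infimum
`ℓ(φ) = inf_{x ∈ T} d(x, φ(x))` is attained. -/
theorem translationLength_attained {T : Type*} [MetricSpace T] [Nonempty T]
    (h : IsRTree T) (φ : T ≃ᵢ T) :
    ∃ x : T, dist x (φ x) = translationLength (⇑φ) := by
  have hbdd : BddBelow (Set.range fun x : T => dist x (φ x)) :=
    ⟨0, fun v hv => by obtain ⟨x, rfl⟩ := hv; exact dist_nonneg⟩
  obtain ⟨p⟩ := ‹Nonempty T›
  obtain ⟨L, hL⟩ : ∃ L, dist p (φ p) = L := ⟨_, rfl⟩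
  have hL0 : 0 ≤ L := hL ▸ dist_nonneg
  obtain ⟨f, hf, hf0, hfL⟩ := exists_geo h p (φ p)
  rw [hL] at hf hfL
  have hd1 : dist (φ p) p = L := by rw [dist_comm]; exact hL
  have hd2 : dist (φ p) (φ (φ p)) = L := by rw [φ.dist_eq]; exact hL
  -- first pair of geodesics from φ p : reversed f (to p) and φ ∘ f (to φ (φ p))
  have hA1 : ∀ s ∈ Set.Icc (0:ℝ) L, ∀ t ∈ Set.Icc (0:ℝ) L,
      dist (f (L - s)) (f (L - t)) = |s - t| := by
    intro s hs t ht
    rw [hf (L - s) ⟨by linarith [hs.2], by linarith [hs.1]⟩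
      (L - t) ⟨by linarith [ht.2], by linarith [ht.1]⟩,
      show L - s - (L - t) = t - s by ring, abs_sub_comm]
  have hA10 : f (L - 0) = φ p := by rw [sub_zero]; exact hfL
  have hA1L : f (L - L) = p := by rw [sub_self]; exact hf0
  have hB1 : ∀ s ∈ Set.Icc (0:ℝ) L, ∀ t ∈ Set.Icc (0:ℝ) L,
      dist (φ (f s)) (φ (f t)) = |s - t| := by
    intro s hs t ht
    rw [φ.dist_eq]
    exact hf s hs t ht
  have hB10 : φ (f 0) = φ p := by rw [hf0]
  have hB1L : φ (f L) = φ (φ p) := by rw [hfL]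
  have M1 := geo_pair (α := fun u => f (L - u)) (β := fun u => φ (f u)) h hd1 hd2
    hA1 hA10 hA1L hB1 hB10 hB1L
  obtain ⟨k, hk⟩ : ∃ k, gromovProd (φ p) p (φ (φ p)) = k := ⟨_, rfl⟩
  rw [hk] at M1
  obtain ⟨hk0, hkL1, hkL2, Hagree, Hform⟩ := M1
  by_cases hcase : L / 2 ≤ k
  · -- elliptic case : midpoint is fixed
    have hfix0 : f (L - L/2) = φ (f (L/2)) := Hagree (L/2) (by linarith) hcase
    rw [show L - L/2 = L/2 by ring] at hfix0
    refine ⟨f (L/2), ?_⟩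
    have hz : dist (f (L/2)) (φ (f (L/2))) = 0 := by rw [← hfix0, dist_self]
    have hle : translationLength ⇑φ ≤ 0 := by
      have h' := ciInf_le hbdd (f (L/2))
      rw [hz] at h'
      exact h'
    have hge : (0:ℝ) ≤ translationLength ⇑φ := le_ciInf fun x => dist_nonneg
    rw [hz]
    linarith
  · -- hyperbolic case
    have hklt : k < L / 2 := not_le.mp hcase
    have hd3 : dist (φ (φ p)) (φ p) = L := by rw [φ.dist_eq]; exact hd1
    have hd4 : dist (φ (φ p)) (φ (φ (φ p))) = L := by rw [φ.dist_eq]; exact hd2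
    have hA2 : ∀ s ∈ Set.Icc (0:ℝ) L, ∀ t ∈ Set.Icc (0:ℝ) L,
        dist (φ (f (L - s))) (φ (f (L - t))) = |s - t| := by
      intro s hs t ht
      rw [φ.dist_eq]
      exact hA1 s hs t ht
    have hA20 : φ (f (L - 0)) = φ (φ p) := by rw [sub_zero, hfL]
    have hA2L : φ (f (L - L)) = φ p := by rw [sub_self, hf0]
    have hB2 : ∀ s ∈ Set.Icc (0:ℝ) L, ∀ t ∈ Set.Icc (0:ℝ) L,
        dist (φ (φ (f s))) (φ (φ (f t))) = |s - t| := by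
      intro s hs t ht
      rw [φ.dist_eq, φ.dist_eq]
      exact hf s hs t ht
    have hB20 : φ (φ (f 0)) = φ (φ p) := by rw [hf0]
    have hB2L : φ (φ (f L)) = φ (φ (φ p)) := by rw [hfL]
    have M2 := geo_pair (α := fun u => φ (f (L - u))) (β := fun u => φ (φ (f u))) h hd3 hd4
      hA2 hA20 hA2L hB2 hB20 hB2L
    have hk2 : gromovProd (φ (φ p)) (φ p) (φ (φ (φ p))) = k := by
      rw [← hk]
      exact gromov_iso φ (φ p) p (φ (φ p))
    rw [hk2] at M2
    obtain ⟨-, -, -, -, Hform2⟩ := M2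
    -- the five key distances
    have d1 : dist (f (L/2)) (φ (f (L/2))) = L - 2*k := by
      have htmp : dist (f (L - L/2)) (φ (f (L/2))) = L/2 + L/2 - 2*k :=
        Hform (L/2) (L/2) (by linarith) (by linarith) (by linarith) (by linarith)
      rw [show L - L/2 = L/2 by ring] at htmp
      linarith
    have d2 : dist (f (L/2)) (φ (f (L - k))) = L/2 + (L - k) - 2*k := by
      have htmp : dist (f (L - L/2)) (φ (f (L - k))) = L/2 + (L - k) - 2*k :=
        Hform (L/2) (L - k) (by linarith) (by linarith) (by linarith) (by linarith)
      rw [show L - L/2 = L/2 by ring] at htmp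
      exact htmp
    have d5 : dist (φ (f (L/2))) (φ (f (L - k))) = L/2 - k := by
      rw [φ.dist_eq, hf (L/2) ⟨by linarith, by linarith⟩ (L - k) ⟨by linarith, by linarith⟩,
        abs_of_nonpos (by linarith)]
      ring
    have d3 : dist (φ (f (L - k))) (φ (φ (f (L/2)))) = L/2 - k := by
      have htmp : dist (φ (f (L - k))) (φ (φ (f (L/2)))) = k + L/2 - 2*k :=
        Hform2 k (L/2) le_rfl (by linarith) (by linarith) (by linarith)
      linarith
    have d4 : dist (φ (f (L/2))) (φ (φ (f (L/2)))) = L - 2*k := by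
      rw [φ.dist_eq]; exact d1
    -- key alignment : dist (m, φ² m) = 2 (L - 2k)
    have hyp := zero_hyp h (φ (f (L/2))) (f (L/2)) (φ (φ (f (L/2)))) (φ (f (L - k)))
    have g3 : gromovProd (φ (f (L/2))) (f (L/2)) (φ (f (L - k))) = 0 := by
      simp only [gromovProd]
      rw [dist_comm (φ (f (L/2))) (f (L/2)), d1, d5, d2]
      ring
    have g2 : gromovProd (φ (f (L/2))) (φ (φ (f (L/2)))) (φ (f (L - k))) = (L - 2*k)/2 := by
      simp only [gromovProd]
      rw [d4, d5, dist_comm (φ (φ (f (L/2)))) (φ (f (L - k))), d3]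
      ring
    rw [g2, g3] at hyp
    have hnn := gromovProd_nonneg (φ (f (L/2))) (f (L/2)) (φ (φ (f (L/2))))
    have hD : dist (f (L/2)) (φ (φ (f (L/2)))) = 2*(L - 2*k) := by
      rcases min_le_iff.mp hyp with hc | hc
      · have hzz : gromovProd (φ (f (L/2))) (f (L/2)) (φ (φ (f (L/2)))) = 0 :=
          le_antisymm hc hnn
        simp only [gromovProd] at hzz
        rw [dist_comm (φ (f (L/2))) (f (L/2)), d1, d4] at hzz
        linarith
      · linarith
    set m := f (L/2) with hm
    have hpos : (0:ℝ) < L - 2*k := by linarith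
    -- iterated translation : dist m (φⁿ m) = n (L - 2k)
    have Claim : ∀ n : ℕ, dist m ((⇑φ)^[n] m) = n * (L - 2*k) ∧
        dist m ((⇑φ)^[n+1] m) = n * (L - 2*k) + (L - 2*k) := by
      intro n
      induction n with
      | zero => exact ⟨by simp, by simpa using d1⟩
      | succ n ih =>
        have e1 : dist ((⇑φ)^[n+1] m) ((⇑φ)^[n] m) = L - 2*k := by
          rw [Function.iterate_succ_apply, iter_dist φ n (φ m) m, dist_comm]
          exact d1
        have e2 : dist ((⇑φ)^[n+1] m) ((⇑φ)^[n+2] m) = L - 2*k := by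
          rw [show ((⇑φ)^[n+2] m) = (⇑φ)^[n+1] (φ m) from Function.iterate_succ_apply ⇑φ (n+1) m,
            iter_dist φ (n+1) m (φ m)]
          exact d1
        have e3 : dist ((⇑φ)^[n] m) ((⇑φ)^[n+2] m) = 2*(L - 2*k) := by
          rw [show ((⇑φ)^[n+2] m) = (⇑φ)^[n] (φ (φ m)) from
            (Function.iterate_succ_apply ⇑φ (n+1) m).trans
              (Function.iterate_succ_apply ⇑φ n (φ m)),
            iter_dist φ n m (φ (φ m))]
          exact hD
        have e4 : dist ((⇑φ)^[n+1] m) m = n*(L - 2*k) + (L - 2*k) := by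
          rw [dist_comm]; exact ih.2
        have e5 : dist ((⇑φ)^[n] m) m = n*(L - 2*k) := by
          rw [dist_comm]; exact ih.1
        have g1 : gromovProd ((⇑φ)^[n+1] m) ((⇑φ)^[n] m) ((⇑φ)^[n+2] m) = 0 := by
          simp only [gromovProd]; rw [e1, e2, e3]; ring
        have g2' : gromovProd ((⇑φ)^[n+1] m) ((⇑φ)^[n] m) m = L - 2*k := by
          simp only [gromovProd]; rw [e1, e4, e5]; ring
        have hyp2 := zero_hyp h ((⇑φ)^[n+1] m) ((⇑φ)^[n] m) m ((⇑φ)^[n+2] m)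
        rw [g1, g2'] at hyp2
        have hnn2 := gromovProd_nonneg ((⇑φ)^[n+1] m) m ((⇑φ)^[n+2] m)
        have hz : gromovProd ((⇑φ)^[n+1] m) m ((⇑φ)^[n+2] m) = 0 := by
          rcases min_le_iff.mp hyp2 with hc | hc
          · linarith
          · exact le_antisymm hc hnn2
        simp only [gromovProd] at hz
        rw [e4, e2] at hz
        constructor
        · push_cast; rw [ih.2]; ring
        · have : dist m ((⇑φ)^[n+2] m) = n*(L - 2*k) + (L - 2*k) + (L - 2*k) := by linarith
          rw [this]; push_cast; ring
    -- every point moves at least L - 2k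
    have hlow : ∀ x : T, L - 2*k ≤ dist x (φ x) := by
      intro x
      by_contra hx
      push_neg at hx
      have hεpos : 0 < L - 2*k - dist x (φ x) := by linarith
      obtain ⟨n, hn⟩ := exists_nat_gt (2 * dist x m / (L - 2*k - dist x (φ x)))
      have h1 := (Claim n).1
      have h2 := iter_le φ n x
      have h3 := dist_triangle4 m x ((⇑φ)^[n] x) ((⇑φ)^[n] m)
      have h4 : dist ((⇑φ)^[n] x) ((⇑φ)^[n] m) = dist x m := iter_dist φ n x m
      have h5 : 2 * dist x m < n * (L - 2*k - dist x (φ x)) := by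
        rw [div_lt_iff₀ hεpos] at hn
        linarith
      have hexp : (n:ℝ) * (L - 2*k - dist x (φ x)) =
          (n:ℝ) * (L - 2*k) - (n:ℝ) * dist x (φ x) := by ring
      rw [h1, h4, dist_comm m x] at h3
      linarith
    refine ⟨m, ?_⟩
    have hub : translationLength ⇑φ ≤ L - 2*k := by
      have h' := ciInf_le hbdd m
      rw [d1] at h'
      exact h'
    have hlb : L - 2*k ≤ translationLength ⇑φ := le_ciInf hlow
    rw [d1]
    linarith
end

section
/- Let φ be an isometry of an ℝ-tree T onto itself with ℓ(φ) > 0. Then there exists an isometric embedding A : ℝ → T such that φ(A(t)) = A(t + ℓ(φ)) for all t ∈ ℝ, and the image of A equals the set {x ∈ T : d(x, φ(x)) = ℓ(φ)}. In particular, φ has a unique invariant line (isometric image of ℝ), called its axis, on which φ acts as a translation by ℓ(φ). -/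
/-!
Pick a point `p` and let `r` be the branch point of `p` and `φ² p` seen from `φ p`. As `φ` has no
fixed point, the path `r, φ r, φ² r, …` never backtracks, so it is a geodesic, and the translates
of the segment `[r, φ r]` by the powers of `φ` form a line `A` on which `φ` translates by
`L = d(r, φ r)`. Every point `x` has a foot `A u` on this line, through which it sees all of `A`;
the foot of `φ x` is `A (u + L) ≠ A u`, so the geodesic from `x` to `φ x` runs along the line and
`d(x, φ x) = 2 d(x, A u) + L`. Hence `ℓ(φ) = L`, and the points moved by exactly `L` are those of
`A`. On a `φ`-invariant line `B` the isometry `φ` is a reflection, which has a fixed point, or a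
translation; in the latter case all points of `B` are equally far from `A`, which forces `B = A`.
-/

open Set Filter

section IsometricOn

variable {T : Type*} [MetricSpace T] {γ : ℝ → T} {s : Set ℝ}

def IsometricOn (γ : ℝ → T) (s : Set ℝ) : Prop :=
  ∀ a ∈ s, ∀ b ∈ s, dist (γ a) (γ b) = |a - b|

theorem Isometry.isometricOn (hγ : Isometry γ) (s : Set ℝ) : IsometricOn γ s :=
  fun a _ b _ => by rw [hγ.dist_eq, Real.dist_eq]

theorem IsometricOn.mono {t : Set ℝ} (hγ : IsometricOn γ s) (hts : t ⊆ s) : IsometricOn γ t :=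
  fun a ha b hb => hγ a (hts ha) b (hts hb)

theorem IsometricOn.dist_eq_sub {a b : ℝ} (hγ : IsometricOn γ (Icc a b)) {t : ℝ}
    (ht : t ∈ Icc a b) : dist (γ a) (γ t) = t - a := by
  rw [hγ a (left_mem_Icc.2 (ht.1.trans ht.2)) t ht, abs_sub_comm, abs_of_nonneg (sub_nonneg.2 ht.1)]

theorem IsometricOn.lipschitzOnWith (hγ : IsometricOn γ s) : LipschitzOnWith 1 γ s :=
  LipschitzOnWith.of_dist_le_mul fun a ha b hb => by simp [hγ a ha b hb, Real.dist_eq]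

theorem IsometricOn.injOn (hγ : IsometricOn γ s) : InjOn γ s := fun a ha b hb hab => by
  have := hγ a ha b hb
  rwa [hab, dist_self, eq_comm, abs_eq_zero, sub_eq_zero] at this

theorem IsometricOn.isArcIn_image_Icc {a b : ℝ} (hab : a ≤ b) (hγ : IsometricOn γ (Icc a b)) :
    IsArcIn (γ a) (γ b) (γ '' Icc a b) :=
  ⟨a, b, hab, γ, hγ.lipschitzOnWith.continuousOn, hγ.injOn, rfl, rfl, rfl⟩

end IsometricOn

section JoinAt

variable {T : Type*} {α β : ℝ → T} {a b : ℝ}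

noncomputable def joinAt (α β : ℝ → T) (t : ℝ) : T := if t ≤ 0 then α (-t) else β t

theorem joinAt_of_nonpos {t : ℝ} (ht : t ≤ 0) : joinAt α β t = α (-t) := if_pos ht

theorem joinAt_of_nonneg (h0 : α 0 = β 0) {t : ℝ} (ht : 0 ≤ t) : joinAt α β t = β t := by
  rcases ht.eq_or_lt with rfl | hpos
  · simp [joinAt, h0]
  · exact if_neg hpos.not_ge

theorem image_joinAt (h0 : α 0 = β 0) (ha : 0 ≤ a) (hb : 0 ≤ b) :
    joinAt α β '' Icc (-a) b = α '' Icc 0 a ∪ β '' Icc 0 b := by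
  rw [← Icc_union_Icc_eq_Icc (neg_nonpos.2 ha) hb, image_union,
    EqOn.image_eq (f₂ := fun t => α (-t)) fun t ht => joinAt_of_nonpos ht.2,
    EqOn.image_eq (f₂ := β) fun t ht => joinAt_of_nonneg h0 ht.1, ← image_image α Neg.neg,
    image_neg_Icc, neg_neg, neg_zero]

theorem continuousOn_joinAt [MetricSpace T] (hα : IsometricOn α (Icc 0 a))
    (hβ : IsometricOn β (Icc 0 b)) (h0 : α 0 = β 0)
    (ha : 0 ≤ a) (hb : 0 ≤ b) : ContinuousOn (joinAt α β) (Icc (-a) b) := by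
  rw [← Icc_union_Icc_eq_Icc (neg_nonpos.2 ha) hb]
  refine ContinuousOn.union_of_isClosed ?_ ?_ isClosed_Icc isClosed_Icc
  · refine ContinuousOn.congr ?_ fun t ht => joinAt_of_nonpos ht.2
    exact hα.lipschitzOnWith.continuousOn.comp continuousOn_neg
      fun t ht => ⟨by linarith [ht.2], by linarith [ht.1]⟩
  · exact hβ.lipschitzOnWith.continuousOn.congr fun t ht =>
      joinAt_of_nonneg h0 ht.1

theorem injOn_joinAt [MetricSpace T] (hα : IsometricOn α (Icc 0 a))
    (hβ : IsometricOn β (Icc 0 b)) (h0 : α 0 = β 0)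
    (hαβ : α '' Icc 0 a ∩ β '' Icc 0 b ⊆ {α 0}) : InjOn (joinAt α β) (Icc (-a) b) := by
  have hnegI : ∀ s ∈ Icc (-a) 0, -s ∈ Icc 0 a := fun s hs =>
    ⟨by linarith [hs.2], by linarith [hs.1]⟩
  have hcross : ∀ s ∈ Icc (-a) 0, ∀ t ∈ Icc 0 b, joinAt α β s = joinAt α β t → s = t :=
    fun s hs t ht hst => by
      rw [joinAt_of_nonpos hs.2, joinAt_of_nonneg h0 ht.1] at hst
      have hβt : β t = α 0 := hαβ ⟨hst ▸ mem_image_of_mem α (hnegI s hs), mem_image_of_mem β ht⟩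
      have hs0 : -s = 0 := hα.injOn (hnegI s hs)
        (left_mem_Icc.2 ((hnegI s hs).1.trans (hnegI s hs).2)) (hst.trans hβt)
      have ht0 : t = 0 := hβ.injOn ht (left_mem_Icc.2 (ht.1.trans ht.2)) (hβt.trans h0)
      linarith
  intro s hs t ht hst
  rcases le_total s 0 with hs0 | hs0 <;> rcases le_total t 0 with ht0 | ht0
  · exact neg_inj.1 <| hα.injOn (hnegI s ⟨hs.1, hs0⟩) (hnegI t ⟨ht.1, ht0⟩) <| by
      rw [← joinAt_of_nonpos (α := α) (β := β) hs0, ← joinAt_of_nonpos (α := α) (β := β) ht0, hst]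
  · exact hcross s ⟨hs.1, hs0⟩ t ⟨ht0, ht.2⟩ hst
  · exact (hcross t ⟨ht.1, ht0⟩ s ⟨hs0, hs.2⟩ hst.symm).symm
  · exact hβ.injOn ⟨hs0, hs.2⟩ ⟨ht0, ht.2⟩ <| by
      rw [← joinAt_of_nonneg h0 hs0, ← joinAt_of_nonneg h0 ht0, hst]

theorem isArcIn_union_image_Icc [MetricSpace T]
    (hα : IsometricOn α (Icc 0 a))
    (hβ : IsometricOn β (Icc 0 b)) (h0 : α 0 = β 0)
    (hαβ : α '' Icc 0 a ∩ β '' Icc 0 b ⊆ {α 0}) (ha : 0 ≤ a) (hb : 0 ≤ b) :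
    IsArcIn (α a) (β b) (α '' Icc 0 a ∪ β '' Icc 0 b) :=
  ⟨-a, b, by linarith, joinAt α β, continuousOn_joinAt hα hβ h0 ha hb, injOn_joinAt hα hβ h0 hαβ,
    image_joinAt h0 ha hb, by rw [joinAt_of_nonpos (by linarith), neg_neg],
    joinAt_of_nonneg h0 hb⟩

end JoinAt

theorem Isometry.eq_add_or_eq_sub {ψ : ℝ → ℝ} (hψ : Isometry ψ) :
    (∀ t, ψ t = ψ 0 + t) ∨ ∀ t, ψ t = ψ 0 - t := by
  set f := hψ.affineIsometryOfStrictConvexSpace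
  have hf : ∀ t, ψ t = ψ 0 + t * f.linearIsometry 1 := fun t => by
    have := f.map_vadd 0 t
    rw [vadd_eq_add, add_zero, vadd_eq_add] at this
    rw [show ψ t = f t from rfl, this, add_comm, ← smul_eq_mul, ← f.linearIsometry.map_smul,
      smul_eq_mul, mul_one]
    rfl
  have hc : |f.linearIsometry 1| = 1 := by
    rw [← Real.norm_eq_abs, f.linearIsometry.norm_map, norm_one]
  rcases (abs_eq zero_le_one).mp hc with hc | hc
  · exact .inl fun t => by rw [hf, hc, mul_one]
  · exact .inr fun t => by rw [hf, hc, mul_neg_one, sub_eq_add_neg]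

theorem Isometry.surjective_of_real {ψ : ℝ → ℝ} (hψ : Isometry ψ) : Function.Surjective ψ := by
  rcases hψ.eq_add_or_eq_sub with hψ | hψ
  · exact fun s => ⟨s - ψ 0, by rw [hψ]; ring⟩
  · exact fun s => ⟨ψ 0 - s, by rw [hψ]; ring⟩

theorem Isometry.exists_isometry_comp_eq {α β γ : Type*} [PseudoMetricSpace α]
    [PseudoMetricSpace β] [PseudoMetricSpace γ] {A : α → γ} {C : β → γ} (hA : Isometry A)
    (hC : Isometry C) (hCA : range C ⊆ range A) : ∃ F : β → α, Isometry F ∧ A ∘ F = C := by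
  choose F hF using fun t => hCA ⟨t, rfl⟩
  exact ⟨F, Isometry.of_dist_eq fun s t => by rw [← hA.dist_eq, hF, hF, hC.dist_eq], funext hF⟩

theorem Isometry.range_eq_of_range_subset {T : Type*} [MetricSpace T] {A B : ℝ → T}
    (hA : Isometry A) (hB : Isometry B) (hBA : range B ⊆ range A) : range B = range A := by
  obtain ⟨F, hF, rfl⟩ := hA.exists_isometry_comp_eq hB hBA
  exact hF.surjective_of_real.range_comp A

theorem translationLength_le {T : Type*} [MetricSpace T] (φ : T → T) (x : T) :
    translationLength φ ≤ dist x (φ x) :=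
  ciInf_le ⟨0, by rintro _ ⟨y, rfl⟩; exact dist_nonneg⟩ x

theorem dist_line_apply {T : Type*} [MetricSpace T] {A : ℝ → T} {φ : T → T} {L : ℝ} (hL : 0 ≤ L)
    (hA : Isometry A) (hφA : ∀ t, φ (A t) = A (t + L)) (t : ℝ) : dist (A t) (φ (A t)) = L := by
  rw [hφA, hA.dist_eq, Real.dist_eq, sub_add_cancel_left, abs_neg, abs_of_nonneg hL]

section IsProjection

variable {T : Type*} [MetricSpace T] {A : ℝ → T} {x : T} {u : ℝ}

/-- `A u` is the foot of `x` on the line `A`: in an ℝ-tree, the geodesics from `x` to the points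
of `A` all pass through `A u`. -/
def IsProjection (A : ℝ → T) (x : T) (u : ℝ) : Prop :=
  ∀ t, dist x (A t) = dist x (A u) + |t - u|

theorem IsProjection.unique {v : ℝ} (hu : IsProjection A x u) (hv : IsProjection A x v) :
    u = v := by
  have : |u - v| = 0 := by linarith [abs_nonneg (u - v), abs_sub_comm u v, hu v, hv u]
  exact sub_eq_zero.1 (abs_eq_zero.1 this)

theorem IsProjection.map {φ : T ≃ᵢ T} {L : ℝ} (hφA : ∀ t, φ (A t) = A (t + L))
    (hu : IsProjection A x u) : IsProjection A (φ x) (u + L) := fun t => by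
  have hshift : ∀ s, dist (φ x) (A s) = dist x (A (s - L)) := fun s => by
    rw [← φ.dist_eq x, hφA, sub_add_cancel]
  rw [hshift, hshift, hu (t - L), add_sub_cancel_right, sub_sub, add_comm L]

end IsProjection

section OrbitLine

variable {T : Type*} [MetricSpace T] (φ : T ≃ᵢ T) {L : ℝ} (hL : 0 < L) (σ : ℝ → T)

/-- The extension of `σ` from `[0, L)` to `ℝ` by `t + k L ↦ φ ^ k (σ t)`. -/
noncomputable def orbitLine (t : ℝ) : T := (φ ^ toIcoDiv hL 0 t) (σ (toIcoMod hL 0 t))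

theorem apply_orbitLine (t : ℝ) : φ (orbitLine φ hL σ t) = orbitLine φ hL σ (t + L) := by
  rw [orbitLine, orbitLine, toIcoDiv_add_right, toIcoMod_add_right, add_comm _ (1 : ℤ),
    zpow_one_add, IsometryEquiv.mul_apply]

variable {φ σ}

theorem dist_pow_succ_apply_of_isometricOn (hσ : IsometricOn σ (Icc 0 L))
    (hσL : σ L = φ (σ 0)) (horbit : ∀ n : ℕ, dist (σ 0) ((φ ^ n) (σ 0)) = n * L)
    {u v : ℝ} (hu : u ∈ Icc 0 L) (hv : v ∈ Icc 0 L) (n : ℕ) :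
    dist (σ u) ((φ ^ (n + 1)) (σ v)) = (n + 1) * L + v - u := by
  have hσ0 : ∀ s ∈ Icc 0 L, dist (σ 0) (σ s) = s := fun s hs => by
    rw [hσ.dist_eq_sub hs, sub_zero]
  have hσL' : ∀ s ∈ Icc 0 L, dist (σ s) (σ L) = L - s := fun s hs => by
    rw [hσ s hs L (right_mem_Icc.2 (hs.1.trans hs.2)), abs_sub_comm,
      abs_of_nonneg (sub_nonneg.2 hs.2)]
  apply le_antisymm
  · calc dist (σ u) ((φ ^ (n + 1)) (σ v))
        ≤ dist (σ u) (σ L) + dist (σ L) ((φ ^ (n + 1)) (σ 0)) +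
            dist ((φ ^ (n + 1)) (σ 0)) ((φ ^ (n + 1)) (σ v)) := dist_triangle4 _ _ _ _
      _ = (L - u) + n * L + v := by
        rw [hσL' u hu, IsometryEquiv.dist_eq, hσ0 v hv, hσL, pow_succ', IsometryEquiv.mul_apply,
          φ.dist_eq, horbit]
      _ = (n + 1) * L + v - u := by ring
  -- `φ ^ (n + 1)` maps `σ L` to `φ ^ (n + 2) (σ 0)`, at distance `(n + 2) L` from `σ 0`.
  · have := dist_triangle4 (σ 0) (σ u) ((φ ^ (n + 1)) (σ v)) ((φ ^ (n + 1)) (σ L))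
    rw [hσ0 u hu, IsometryEquiv.dist_eq, hσL' v hv, hσL, ← IsometryEquiv.mul_apply, ← pow_succ,
      horbit] at this
    push_cast at this
    linarith

theorem dist_orbitLine_of_toIcoDiv_lt (hσ : IsometricOn σ (Icc 0 L))
    (hσL : σ L = φ (σ 0)) (horbit : ∀ n : ℕ, dist (σ 0) ((φ ^ n) (σ 0)) = n * L)
    {s t : ℝ} (hst : toIcoDiv hL 0 s < toIcoDiv hL 0 t) :
    dist (orbitLine φ hL σ s) (orbitLine φ hL σ t) = t - s := by
  obtain ⟨k, hk⟩ : ∃ k : ℕ, toIcoDiv hL 0 t - toIcoDiv hL 0 s = k + 1 :=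
    ⟨(toIcoDiv hL 0 t - toIcoDiv hL 0 s - 1).toNat, by omega⟩
  have ht := toIcoMod_add_toIcoDiv_zsmul hL 0 t
  have hs := toIcoMod_add_toIcoDiv_zsmul hL 0 s
  rw [zsmul_eq_mul] at ht hs
  have hk' : (toIcoDiv hL 0 t : ℝ) - toIcoDiv hL 0 s = k + 1 := by exact_mod_cast hk
  rw [orbitLine, orbitLine, show toIcoDiv hL 0 t = toIcoDiv hL 0 s + (k + 1 : ℕ) by omega,
    zpow_add, zpow_natCast, IsometryEquiv.mul_apply, IsometryEquiv.dist_eq,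
    dist_pow_succ_apply_of_isometricOn hσ hσL horbit (Ico_subset_Icc_self (toIcoMod_mem_Ico' hL s))
      (Ico_subset_Icc_self (toIcoMod_mem_Ico' hL t))]
  linear_combination ht - hs - L * hk'

theorem isometry_orbitLine (hσ : IsometricOn σ (Icc 0 L))
    (hσL : σ L = φ (σ 0)) (horbit : ∀ n : ℕ, dist (σ 0) ((φ ^ n) (σ 0)) = n * L) :
    Isometry (orbitLine φ hL σ) := by
  refine Isometry.of_dist_eq fun s t => ?_
  rcases lt_trichotomy (toIcoDiv hL 0 s) (toIcoDiv hL 0 t) with hlt | heq | hgt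
  · have hd := dist_orbitLine_of_toIcoDiv_lt hL hσ hσL horbit hlt
    rw [hd, Real.dist_eq, abs_sub_comm, abs_of_nonneg (hd ▸ dist_nonneg)]
  · have ht := toIcoMod_add_toIcoDiv_zsmul hL 0 t
    have hs := toIcoMod_add_toIcoDiv_zsmul hL 0 s
    rw [orbitLine, orbitLine, heq, IsometryEquiv.dist_eq,
      hσ _ (Ico_subset_Icc_self (toIcoMod_mem_Ico' hL s)) _
        (Ico_subset_Icc_self (toIcoMod_mem_Ico' hL t)), Real.dist_eq]
    rw [heq] at hs
    congr 1
    linear_combination hs - ht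
  · have hd := dist_orbitLine_of_toIcoDiv_lt hL hσ hσL horbit hgt
    rw [dist_comm, hd, Real.dist_eq, abs_of_nonneg (hd ▸ dist_nonneg)]

end OrbitLine

namespace IsRTree

variable {T : Type*} [MetricSpace T] (h : IsRTree T)

noncomputable def seg (x y : T) : Set T := (h x y).1.choose

theorem isArcIn_seg (x y : T) : IsArcIn x y (h.seg x y) := (h x y).1.choose_spec.1

theorem eq_seg_of_isArcIn {x y : T} {S : Set T} (hS : IsArcIn x y S) : S = h.seg x y :=
  (h x y).1.choose_spec.2 S hS

theorem image_Icc_eq_seg {γ : ℝ → T} {a b : ℝ} (hab : a ≤ b)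
    (hγ : IsometricOn γ (Icc a b)) :
    γ '' Icc a b = h.seg (γ a) (γ b) :=
  h.eq_seg_of_isArcIn (hγ.isArcIn_image_Icc hab)

theorem exists_param_seg (x y : T) : ∃ γ : ℝ → T,
    IsometricOn γ (Icc 0 (dist x y)) ∧
    γ 0 = x ∧ γ (dist x y) = y ∧ γ '' Icc 0 (dist x y) = h.seg x y ∧
    ∀ s ∈ Icc 0 (dist x y), dist x (γ s) = s := by
  obtain ⟨a, b, hab, α, hα, himg, rfl, rfl⟩ := (h x y).2 _ (h.isArcIn_seg x y)
  have hD : dist (α a) (α b) = b - a := by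
    rw [hα a (left_mem_Icc.2 hab) b (right_mem_Icc.2 hab), abs_sub_comm,
      abs_of_nonneg (sub_nonneg.2 hab)]
  have hγ : IsometricOn (fun t => α (t + a)) (Icc 0 (b - a)) := fun s hs t ht => by
    rw [hα (s + a) ⟨by linarith [hs.1], by linarith [hs.2]⟩ (t + a)
      ⟨by linarith [ht.1], by linarith [ht.2]⟩, add_sub_add_right_eq_sub]
  refine ⟨fun t => α (t + a), hD ▸ hγ, by simp, by simp [hD], ?_, fun s hs => ?_⟩
  · rw [← himg, hD, ← image_image (fun t => α t) (· + a), image_add_const_Icc]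
    simp
  · rw [hD] at hs
    simpa using hγ.dist_eq_sub hs

theorem isCompact_seg (x y : T) : IsCompact (h.seg x y) := by
  obtain ⟨γ, hγ, -, -, himg, -⟩ := h.exists_param_seg x y
  exact himg ▸ isCompact_Icc.image_of_continuousOn hγ.lipschitzOnWith.continuousOn

theorem left_mem_seg (x y : T) : x ∈ h.seg x y := by
  obtain ⟨γ, -, h0, -, himg, -⟩ := h.exists_param_seg x y
  exact himg ▸ ⟨0, left_mem_Icc.2 dist_nonneg, h0⟩

theorem right_mem_seg (x y : T) : y ∈ h.seg x y := by
  obtain ⟨γ, -, -, hD, himg, -⟩ := h.exists_param_seg x y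
  exact himg ▸ ⟨dist x y, right_mem_Icc.2 dist_nonneg, hD⟩

theorem seg_comm (x y : T) : h.seg x y = h.seg y x := by
  obtain ⟨γ, hγ, h0, hD, himg, -⟩ := h.exists_param_seg x y
  have hrev : IsometricOn (fun t => γ (dist x y - t)) (Icc 0 (dist x y)) := fun s hs t ht => by
    rw [hγ _ ⟨by linarith [hs.2], by linarith [hs.1]⟩ _ ⟨by linarith [ht.2], by linarith [ht.1]⟩,
      sub_sub_sub_cancel_left, abs_sub_comm]
  have := h.image_Icc_eq_seg dist_nonneg hrev
  rw [sub_zero, sub_self, hD, h0] at this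
  rw [← this, ← himg, ← image_image γ (dist x y - ·), image_const_sub_Icc, sub_zero, sub_self]

theorem seg_self (x : T) : h.seg x x = {x} := by
  obtain ⟨γ, -, h0, -, himg, -⟩ := h.exists_param_seg x x
  rw [← himg, dist_self, Icc_self, image_singleton, h0]

theorem dist_add_dist_of_mem_seg {x y z : T} (hz : z ∈ h.seg x y) :
    dist x z + dist z y = dist x y := by
  obtain ⟨γ, hγ, -, hD, himg, hdist⟩ := h.exists_param_seg x y
  obtain ⟨s, hs, rfl⟩ := himg ▸ hz
  have hsy := hγ s hs _ (right_mem_Icc.2 dist_nonneg)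
  rw [hD, abs_of_nonpos (by linarith [hs.2])] at hsy
  rw [hdist s hs, hsy]
  ring

theorem image_Icc_zero_eq_seg {x y : T} {γ : ℝ → T} (hγ : IsometricOn γ (Icc 0 (dist x y)))
    (h0 : γ 0 = x) {s : ℝ} (hs : s ∈ Icc 0 (dist x y)) : γ '' Icc 0 s = h.seg x (γ s) :=
  h0 ▸ h.image_Icc_eq_seg hs.1 (hγ.mono (Icc_subset_Icc_right hs.2))

theorem mem_seg_of_dist_le {x y z z' : T} (hz : z ∈ h.seg x y) (hz' : z' ∈ h.seg x y)
    (hle : dist x z ≤ dist x z') : z ∈ h.seg x z' := by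
  obtain ⟨γ, hγ, h0, -, himg, hdist⟩ := h.exists_param_seg x y
  obtain ⟨s, hs, rfl⟩ := himg ▸ hz
  obtain ⟨s', hs', rfl⟩ := himg ▸ hz'
  rw [hdist s hs, hdist s' hs'] at hle
  exact h.image_Icc_zero_eq_seg hγ h0 hs' ▸ ⟨s, ⟨hs.1, hle⟩, rfl⟩

theorem seg_subset_seg {x y z : T} (hz : z ∈ h.seg x y) : h.seg x z ⊆ h.seg x y := by
  obtain ⟨γ, hγ, h0, -, himg, -⟩ := h.exists_param_seg x y
  obtain ⟨s, hs, rfl⟩ := himg ▸ hz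
  rw [← h.image_Icc_zero_eq_seg hγ h0 hs, ← himg]
  exact image_mono (Icc_subset_Icc_right hs.2)

theorem eq_of_mem_seg_of_dist_eq {x y z z' : T} (hz : z ∈ h.seg x y) (hz' : z' ∈ h.seg x y)
    (heq : dist x z = dist x z') : z = z' := by
  obtain ⟨γ, -, -, -, himg, hdist⟩ := h.exists_param_seg x y
  obtain ⟨s, hs, rfl⟩ := himg ▸ hz
  obtain ⟨s', hs', rfl⟩ := himg ▸ hz'
  rw [hdist s hs, hdist s' hs'] at heq
  rw [heq]

theorem exists_mem_seg_dist_eq {x y : T} {s : ℝ} (hs : s ∈ Icc 0 (dist x y)) :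
    ∃ z ∈ h.seg x y, dist x z = s := by
  obtain ⟨γ, -, -, -, himg, hdist⟩ := h.exists_param_seg x y
  exact ⟨γ s, himg ▸ mem_image_of_mem γ hs, hdist s hs⟩

theorem image_seg (f : T ≃ᵢ T) (x y : T) : f '' h.seg x y = h.seg (f x) (f y) := by
  obtain ⟨γ, hγ, h0, hD, himg, -⟩ := h.exists_param_seg x y
  have hfγ : IsometricOn (fun t => f (γ t)) (Icc 0 (dist x y)) := fun s hs t ht => by
    rw [f.dist_eq, hγ s hs t ht]
  rw [← himg, image_image, h.image_Icc_eq_seg dist_nonneg hfγ, h0, hD]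

theorem seg_subset_seg_right {x y z : T} (hz : z ∈ h.seg x y) : h.seg z y ⊆ h.seg x y := by
  rw [h.seg_comm z, h.seg_comm x]
  exact h.seg_subset_seg (h.seg_comm x y ▸ hz)

theorem dist_le_dist_of_mem_seg {x y z : T} (hz : z ∈ h.seg x y) : dist x z ≤ dist x y := by
  linarith [h.dist_add_dist_of_mem_seg hz, dist_nonneg (x := z) (y := y)]

theorem map_mem_seg (f : T ≃ᵢ T) {x y z : T} (hz : z ∈ h.seg x y) : f z ∈ h.seg (f x) (f y) :=
  h.image_seg f x y ▸ mem_image_of_mem f hz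

theorem seg_eq_union_of_inter_eq_singleton {x y z : T} (hy : h.seg y x ∩ h.seg y z = {y}) :
    h.seg x z = h.seg y x ∪ h.seg y z := by
  obtain ⟨α, hα, hα0, hαD, hαimg, -⟩ := h.exists_param_seg y x
  obtain ⟨β, hβ, hβ0, hβD, hβimg, -⟩ := h.exists_param_seg y z
  have harc := isArcIn_union_image_Icc hα hβ (hα0.trans hβ0.symm)
    (by rw [hαimg, hβimg, hy, hα0]) dist_nonneg dist_nonneg
  rw [hαD, hβD, hαimg, hβimg] at harc
  exact (h.eq_seg_of_isArcIn harc).symm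

theorem dist_eq_add_of_inter_eq_singleton {x y z : T} (hy : h.seg y x ∩ h.seg y z = {y}) :
    dist x z = dist x y + dist y z := by
  have hymem : y ∈ h.seg x z :=
    (h.seg_eq_union_of_inter_eq_singleton hy).symm ▸ Or.inl (h.left_mem_seg y x)
  rw [h.dist_add_dist_of_mem_seg hymem]

theorem inter_eq_singleton_map (f : T ≃ᵢ T) {x y z : T}
    (hy : h.seg y x ∩ h.seg y z = {y}) : h.seg (f y) (f x) ∩ h.seg (f y) (f z) = {f y} := by
  rw [← h.image_seg, ← h.image_seg, ← image_inter f.injective, hy, image_singleton]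

/-- The branch point `w` is the point of `[y, x] ∩ [y, z]` farthest from `y`. -/
theorem exists_branch_point (y x z : T) : ∃ w ∈ h.seg y x, w ∈ h.seg y z ∧
    h.seg y x ∩ h.seg y z = h.seg y w ∧ h.seg w x ∩ h.seg w z = {w} := by
  obtain ⟨w, ⟨hwx, hwz⟩, hmax⟩ := ((h.isCompact_seg y x).inter (h.isCompact_seg y z)).exists_isMaxOn
    ⟨y, h.left_mem_seg y x, h.left_mem_seg y z⟩ (continuous_const.dist continuous_id).continuousOn
  refine ⟨w, hwx, hwz, Subset.antisymm (fun p hp => h.mem_seg_of_dist_le hp.1 hwx (hmax hp))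
    (subset_inter (h.seg_subset_seg hwx) (h.seg_subset_seg hwz)), ?_⟩
  refine Subset.antisymm (fun p ⟨hpx, hpz⟩ => ?_) (singleton_subset_iff.2
    ⟨h.left_mem_seg w x, h.left_mem_seg w z⟩)
  have hp : p ∈ h.seg y x ∩ h.seg y z :=
    ⟨h.seg_subset_seg_right hwx hpx, h.seg_subset_seg_right hwz hpz⟩
  have hle : dist y p ≤ dist y w := hmax hp
  have := h.dist_add_dist_of_mem_seg hpx
  have := h.dist_add_dist_of_mem_seg hwx
  have := h.dist_add_dist_of_mem_seg hp.1
  exact dist_le_zero.1 (by linarith [dist_comm p w])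

theorem inter_eq_singleton_of_mem_seg {x y y' z : T} (hy' : y' ∈ h.seg y x) (hne : y' ≠ y)
    (hy : h.seg y y' ∩ h.seg y z = {y}) : h.seg y x ∩ h.seg y z = {y} := by
  obtain ⟨w, hwx, hwz, hint, -⟩ := h.exists_branch_point y x z
  rw [hint]
  rcases eq_or_ne w y with rfl | hwy
  · exact h.seg_self w
  exfalso
  set s := min (dist y w) (dist y y')
  have hs : 0 < s := lt_min (dist_pos.2 hwy.symm) (dist_pos.2 hne.symm)
  obtain ⟨m, hm, hms⟩ := h.exists_mem_seg_dist_eq (x := y) (y := x)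
    ⟨hs.le, (min_le_left _ _).trans (h.dist_le_dist_of_mem_seg hwx)⟩
  have hmy : m ∈ h.seg y y' ∩ h.seg y z :=
    ⟨h.mem_seg_of_dist_le hm hy' (hms ▸ min_le_right _ _),
      h.seg_subset_seg hwz (h.mem_seg_of_dist_le hm hwx (hms ▸ min_le_left _ _))⟩
  rw [hy, mem_singleton_iff] at hmy
  rw [hmy, dist_self] at hms
  exact hs.ne hms

theorem dist_eq_sum_of_inter_eq_singleton {x : ℕ → T} (hne : ∀ n, x n ≠ x (n + 1))
    (hx : ∀ n, h.seg (x (n + 1)) (x n) ∩ h.seg (x (n + 1)) (x (n + 2)) = {x (n + 1)}) (n : ℕ) :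
    dist (x 0) (x n) = ∑ i ∈ Finset.range n, dist (x i) (x (i + 1)) := by
  suffices ∀ n, dist (x 0) (x n) = ∑ i ∈ Finset.range n, dist (x i) (x (i + 1)) ∧
      h.seg (x n) (x 0) ∩ h.seg (x n) (x (n + 1)) = {x n} from (this n).1
  intro n
  induction n with
  | zero => simpa [h.seg_self] using h.left_mem_seg (x 0) (x 1)
  | succ n ih =>
    obtain ⟨hdist, hint⟩ := ih
    have hmem : x n ∈ h.seg (x (n + 1)) (x 0) := by
      rw [h.seg_comm, h.seg_eq_union_of_inter_eq_singleton hint]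
      exact Or.inl (h.left_mem_seg _ _)
    refine ⟨?_, h.inter_eq_singleton_of_mem_seg hmem (hne n) (hx n)⟩
    rw [h.dist_eq_add_of_inter_eq_singleton hint, hdist, Finset.sum_range_succ]

/-- `r` is the branch point of `p` and `φ² p` seen from `φ p`. If `φ r` were not farther from `φ p`
than `r`, then `φ` would fix the midpoint of `[φ p, p]`. -/
theorem exists_seg_inter_seg_apply_eq_singleton (φ : T ≃ᵢ T) (hφ : ∀ x, φ x ≠ x) (p : T) :
    ∃ r, h.seg (φ r) r ∩ h.seg (φ r) (φ (φ r)) = {φ r} := by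
  set q := φ p
  obtain ⟨r, hrp, hrq, -, hbr⟩ := h.exists_branch_point q p (φ q)
  have hφseg : ∀ {z}, z ∈ h.seg q p → φ z ∈ h.seg q (φ q) := fun hz =>
    h.seg_comm (φ q) q ▸ h.map_mem_seg φ hz
  have hrp' := h.dist_add_dist_of_mem_seg hrp
  have hrq' := h.dist_add_dist_of_mem_seg hrq
  have hD : dist q (φ q) = dist q p := by rw [φ.dist_eq, dist_comm]
  have hdφr : dist q (φ r) = dist p r := φ.dist_eq p r
  have hlt : dist q r < dist q (φ r) := by
    by_contra! hle
    obtain ⟨m, hm, hqm⟩ := h.exists_mem_seg_dist_eq (x := q) (y := p) (s := dist q p / 2)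
      (show dist q p / 2 ∈ Icc 0 (dist q p) from
        ⟨by positivity, by linarith [dist_nonneg (x := q) (y := p)]⟩)
    have hm' := h.dist_add_dist_of_mem_seg hm
    have hmq : m ∈ h.seg q (φ q) := h.seg_subset_seg hrq <|
      h.mem_seg_of_dist_le hm hrp (by linarith [dist_comm p r])
    refine hφ m (h.eq_of_mem_seg_of_dist_eq (hφseg hm) hmq ?_)
    rw [φ.dist_eq p m]
    linarith [dist_comm p m]
  have hr : r ∈ h.seg (φ r) q := h.seg_comm q (φ r) ▸ h.mem_seg_of_dist_le hrq (hφseg hrp) hlt.le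
  have hφr : φ r ∈ h.seg r (φ q) := by
    refine h.seg_comm (φ q) r ▸ h.mem_seg_of_dist_le (h.seg_comm q (φ q) ▸ hφseg hrp)
      (h.seg_comm q (φ q) ▸ hrq) ?_
    rw [φ.dist_eq]
    linarith [dist_comm p r, dist_comm r (φ q)]
  have hbr' := h.inter_eq_singleton_map φ hbr
  refine ⟨r, Subset.antisymm ?_ (singleton_subset_iff.2 ⟨h.left_mem_seg _ _, h.left_mem_seg _ _⟩)⟩
  exact hbr' ▸ inter_subset_inter (h.seg_subset_seg hr) (h.seg_subset_seg (h.map_mem_seg φ hφr))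

theorem dist_pow_apply (φ : T ≃ᵢ T) {r : T} (hr : φ r ≠ r)
    (hbr : h.seg (φ r) r ∩ h.seg (φ r) (φ (φ r)) = {φ r}) (n : ℕ) :
    dist r ((φ ^ n) r) = n * dist r (φ r) := by
  have hsucc : ∀ n (x : T), (φ ^ (n + 1)) x = (φ ^ n) (φ x) := fun n x => by
    rw [pow_succ, IsometryEquiv.mul_apply]
  have hdist : ∀ n, dist ((φ ^ n) r) ((φ ^ (n + 1)) r) = dist r (φ r) := fun n => by
    rw [hsucc, IsometryEquiv.dist_eq]
  have := h.dist_eq_sum_of_inter_eq_singleton (x := fun n => (φ ^ n) r)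
    (fun n => dist_pos.1 (hdist n ▸ dist_pos.2 hr.symm))
    (fun n => by simpa only [hsucc] using h.inter_eq_singleton_map (φ ^ n) hbr) n
  simpa [hdist] using this

theorem seg_eq_image_uIcc {A : ℝ → T} (hA : Isometry A) (s t : ℝ) :
    h.seg (A s) (A t) = A '' uIcc s t := by
  rcases le_total s t with hst | hts
  · rw [uIcc_of_le hst, h.image_Icc_eq_seg hst (hA.isometricOn _)]
  · rw [uIcc_of_ge hts, h.seg_comm, h.image_Icc_eq_seg hts (hA.isometricOn _)]

end IsRTree

section IsProjection

variable {T : Type*} [MetricSpace T] {A : ℝ → T} {x y : T} {u v : ℝ}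

theorem IsProjection.of_mem_seg (h : IsRTree T) (hA : Isometry A) (hu : IsProjection A x u) {z : T}
    (hz : z ∈ h.seg (A u) x) : IsProjection A z u := fun t => by
  have hAut : dist (A u) (A t) = |t - u| := by rw [hA.dist_eq, Real.dist_eq, abs_sub_comm]
  linarith [dist_triangle z (A u) (A t), dist_triangle x z (A t), h.dist_add_dist_of_mem_seg hz,
    hu t, dist_comm x z, dist_comm (A u) z, dist_comm (A u) x]

theorem IsProjection.inter_eq_singleton (h : IsRTree T) (hA : Isometry A)
    (hu : IsProjection A x u) (t : ℝ) :
    h.seg (A u) x ∩ h.seg (A u) (A t) = {A u} := by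
  refine Subset.antisymm (fun z ⟨hzx, hzt⟩ => ?_)
    (singleton_subset_iff.2 ⟨h.left_mem_seg _ _, h.left_mem_seg _ _⟩)
  obtain ⟨s, -, rfl⟩ := h.seg_eq_image_uIcc hA u t ▸ hzt
  have hsum := h.dist_add_dist_of_mem_seg hzx
  rw [hA.dist_eq, Real.dist_eq, dist_comm (A s), hu s, dist_comm (A u) x] at hsum
  have : |s - u| = 0 := by linarith [abs_nonneg (s - u), abs_sub_comm u s]
  rw [sub_eq_zero.1 (abs_eq_zero.1 this), mem_singleton_iff]

theorem IsProjection.dist_eq_of_ne (h : IsRTree T) (hA : Isometry A) (hx : IsProjection A x u)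
    (hy : IsProjection A y v) (huv : u ≠ v) :
    dist x y = dist x (A u) + |u - v| + dist y (A v) := by
  have hint : h.seg (A v) x ∩ h.seg (A v) y = {A v} := by
    refine Subset.antisymm (fun z ⟨hzx, hzy⟩ => ?_)
      (singleton_subset_iff.2 ⟨h.left_mem_seg _ _, h.left_mem_seg _ _⟩)
    rw [h.seg_comm, h.seg_eq_union_of_inter_eq_singleton (hx.inter_eq_singleton h hA v)] at hzx
    rcases hzx with hzx | hzv
    · exact absurd ((hx.of_mem_seg h hA hzx).unique (hy.of_mem_seg h hA hzy)) huv
    · obtain ⟨s, -, rfl⟩ := h.seg_eq_image_uIcc hA u v ▸ hzv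
      exact hy.inter_eq_singleton h hA s ▸ ⟨hzy, h.right_mem_seg _ _⟩
  rw [h.dist_eq_add_of_inter_eq_singleton hint, hx v, dist_comm (A v) y, abs_sub_comm]

end IsProjection

namespace IsRTree

variable {T : Type*} [MetricSpace T]

theorem exists_isometry_apply_eq_add (h : IsRTree T) [Nonempty T] (φ : T ≃ᵢ T)
    (hφ : ∀ x, φ x ≠ x) : ∃ A : ℝ → T, ∃ L > 0, Isometry A ∧ ∀ t, φ (A t) = A (t + L) := by
  obtain ⟨r, hbr⟩ := h.exists_seg_inter_seg_apply_eq_singleton φ hφ (Classical.arbitrary T)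
  have hL : 0 < dist r (φ r) := dist_pos.2 (hφ r).symm
  obtain ⟨σ, hσ, hσ0, hσL, -, -⟩ := h.exists_param_seg r (φ r)
  refine ⟨orbitLine φ hL σ, _, hL, isometry_orbitLine hL hσ (hσ0.symm ▸ hσL) ?_,
    apply_orbitLine φ hL σ⟩
  simpa only [hσ0] using h.dist_pow_apply φ (hφ r) hbr

variable {A : ℝ → T}

/-- The foot of `x` is the point of the line nearest to `x`. -/
theorem exists_isProjection (h : IsRTree T) (hA : Isometry A) (x : T) :
    ∃ u, IsProjection A x u := by
  have hlim : Tendsto (fun t => dist x (A t)) (cocompact ℝ) atTop := by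
    refine tendsto_atTop_mono (fun t => ?_)
      (tendsto_atTop_add_const_right _ (-dist x (A 0)) tendsto_norm_cocompact_atTop)
    have : ‖t‖ = dist (A 0) (A t) := by rw [hA.dist_eq, dist_zero_left]
    linarith [dist_triangle (A 0) x (A t), dist_comm (A 0) x]
  obtain ⟨u, hu⟩ := (continuous_const.dist hA.continuous).exists_forall_le hlim
  refine ⟨u, fun t => ?_⟩
  obtain ⟨w, hwx, hwt, -, hbr⟩ := h.exists_branch_point (A u) x (A t)
  obtain ⟨s, -, rfl⟩ := h.seg_eq_image_uIcc hA u t ▸ hwt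
  have hsum := h.dist_add_dist_of_mem_seg hwx
  have hs : s = u := by
    rw [hA.dist_eq, dist_comm (A s), dist_comm (A u)] at hsum
    exact (dist_le_zero.1 (by linarith [hu s])).symm
  rw [hs] at hbr
  rw [h.dist_eq_add_of_inter_eq_singleton hbr, hA.dist_eq, Real.dist_eq, abs_sub_comm]

variable {φ : T ≃ᵢ T} {L : ℝ}

theorem dist_apply_eq_of_isProjection (h : IsRTree T) (hL : 0 < L) (hA : Isometry A)
    (hφA : ∀ t, φ (A t) = A (t + L)) {x : T} {u : ℝ} (hx : IsProjection A x u) :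
    dist x (φ x) = 2 * dist x (A u) + L := by
  rw [hx.dist_eq_of_ne h hA (hx.map hφA) (by linarith), ← hφA, φ.dist_eq, sub_add_cancel_left,
    abs_neg, abs_of_pos hL]
  ring

theorem le_dist_apply (h : IsRTree T) (hL : 0 < L) (hA : Isometry A)
    (hφA : ∀ t, φ (A t) = A (t + L)) (x : T) : L ≤ dist x (φ x) := by
  obtain ⟨u, hu⟩ := h.exists_isProjection hA x
  linarith [h.dist_apply_eq_of_isProjection hL hA hφA hu, dist_nonneg (x := x) (y := A u)]

theorem translationLength_eq (h : IsRTree T) (hL : 0 < L) (hA : Isometry A)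
    (hφA : ∀ t, φ (A t) = A (t + L)) : translationLength φ = L := by
  have : Nonempty T := ⟨A 0⟩
  exact le_antisymm ((translationLength_le φ (A 0)).trans_eq (dist_line_apply hL.le hA hφA 0))
    (le_ciInf (h.le_dist_apply hL hA hφA))

theorem range_eq_setOf_dist_eq (h : IsRTree T) (hL : 0 < L) (hA : Isometry A)
    (hφA : ∀ t, φ (A t) = A (t + L)) : range A = {x | dist x (φ x) = L} := by
  refine Subset.antisymm (range_subset_iff.2 (dist_line_apply hL.le hA hφA)) fun x hx => ?_
  obtain ⟨u, hu⟩ := h.exists_isProjection hA x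
  have hx : dist x (φ x) = L := hx
  have hxu : dist x (A u) = 0 := by linarith [h.dist_apply_eq_of_isProjection hL hA hφA hu]
  exact ⟨u, (dist_eq_zero.1 hxu).symm⟩

/-- If `e > 0`, the feet of three far-apart points of `B` violate the triangle inequality. -/
theorem range_subset_of_dist_eq (h : IsRTree T) (hA : Isometry A) {B : ℝ → T}
    (hB : Isometry B) {e : ℝ} (he : ∀ t u, IsProjection A (B t) u → dist (B t) (A u) = e) :
    range B ⊆ range A := by
  choose p hp using fun t => h.exists_isProjection hA (B t)
  suffices e = 0 from range_subset_iff.2 fun t =>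
    ⟨p t, (dist_eq_zero.1 ((he t (p t) (hp t)).trans this)).symm⟩
  have he0 : 0 ≤ e := he 0 _ (hp 0) ▸ dist_nonneg
  have hfar : ∀ s t, 2 * e < t - s → |p s - p t| = t - s - 2 * e := fun s t hst => by
    have hBst : dist (B s) (B t) = t - s := by
      rw [hB.dist_eq, Real.dist_eq, abs_sub_comm, abs_of_nonneg (by linarith)]
    have hne : p s ≠ p t := fun hpst => by
      have := dist_triangle (B s) (A (p s)) (B t)
      rw [hpst, dist_comm (A (p t)), he s _ (hpst ▸ hp s), he t _ (hp t), hBst] at this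
      linarith
    have := (hp s).dist_eq_of_ne h hA (hp t) hne
    rw [hBst, he s _ (hp s), he t _ (hp t)] at this
    linarith
  by_contra hne
  have h01 := hfar 0 (4 * e + 1) (by linarith)
  have h12 := hfar (4 * e + 1) (8 * e + 2) (by linarith)
  have h02 := hfar 0 (8 * e + 2) (by linarith)
  have := abs_sub_le (p 0) (p (4 * e + 1)) (p (8 * e + 2))
  have : 0 < e := lt_of_le_of_ne he0 (Ne.symm hne)
  linarith

theorem range_eq_of_image_range_eq (h : IsRTree T) (hL : 0 < L) (hA : Isometry A)
    (hφA : ∀ t, φ (A t) = A (t + L)) {B : ℝ → T} (hB : Isometry B)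
    (hBφ : φ '' range B = range B) : range B = range A := by
  obtain ⟨ψ, hψ, hψB⟩ := hB.exists_isometry_comp_eq (φ.isometry.comp hB) (by rw [range_comp, hBφ])
  have hφB : ∀ t, φ (B t) = B (ψ t) := fun t => (congrFun hψB t).symm
  rcases hψ.eq_add_or_eq_sub with hψ | hψ
  · refine hA.range_eq_of_range_subset hB (h.range_subset_of_dist_eq hA hB (e := (|ψ 0| - L) / 2)
      fun t u hu => ?_)
    have := h.dist_apply_eq_of_isProjection hL hA hφA hu
    rw [hφB, hψ, hB.dist_eq, Real.dist_eq, sub_add_cancel_right, abs_neg] at this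
    exact (eq_div_iff two_ne_zero).2 (by linarith : dist (B t) (A u) * 2 = |ψ 0| - L)
  · have hfix : φ (B (ψ 0 / 2)) = B (ψ 0 / 2) := by rw [hφB, hψ]; ring_nf
    have := h.le_dist_apply hL hA hφA (B (ψ 0 / 2))
    rw [hfix, dist_self] at this
    linarith

end IsRTree

/-- A hyperbolic isometry `φ` of an ℝ-tree (i.e. with `ℓ(φ) > 0`) has an axis: there is an
isometric embedding `A : ℝ → T` on which `φ` acts as translation by `ℓ(φ)`, whose image is
exactly the set of points moved the minimal distance `ℓ(φ)`; moreover this is the unique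
`φ`-invariant line. -/
theorem axis_of_hyperbolic {T : Type*} [MetricSpace T] (h : IsRTree T) (φ : T ≃ᵢ T)
    (hl : 0 < translationLength (⇑φ)) :
    ∃ A : ℝ → T, Isometry A ∧
      (∀ t : ℝ, φ (A t) = A (t + translationLength (⇑φ))) ∧
      Set.range A = {x : T | dist x (φ x) = translationLength (⇑φ)} ∧
      ∀ B : ℝ → T, Isometry B → (⇑φ) '' Set.range B = Set.range B →
        Set.range B = Set.range A := by
  have : Nonempty T := by
    by_contra hT
    rw [not_nonempty_iff] at hT
    exact hl.ne (Real.iInf_of_isEmpty _).symm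
  have hφ : ∀ x, φ x ≠ x := fun x hx =>
    hl.not_ge ((translationLength_le φ x).trans_eq (by rw [hx, dist_self]))
  obtain ⟨A, L, hL, hA, hφA⟩ := h.exists_isometry_apply_eq_add φ hφ
  rw [h.translationLength_eq hL hA hφA]
  exact ⟨A, hA, hφA, h.range_eq_setOf_dist_eq hL hA hφA,
    fun B hB hBφ => h.range_eq_of_image_range_eq hL hA hφA hB hBφ⟩
end

section
/- Let φ be an isometry of an ℝ-tree T onto itself with ℓ(φ) = 0. Then the fixed-point set Fix(φ) = {x ∈ T : φ(x) = x} is nonempty, closed, and connected (i.e., φ fixes a non-empty subtree of T). -/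
open Set

section Lemmas
variable {T : Type*} [MetricSpace T]

lemma geo_continuousOn {α : ℝ → T} {a b : ℝ}
    (hg : ∀ s ∈ Icc a b, ∀ t ∈ Icc a b, dist (α s) (α t) = |s - t|) :
    ContinuousOn α (Icc a b) := by
  have : LipschitzOnWith 1 α (Icc a b) := by
    apply LipschitzOnWith.of_dist_le_mul
    intro s hs t ht
    rw [hg s hs t ht, Real.dist_eq]
    simp
  exact this.continuousOn

lemma geo_injOn {α : ℝ → T} {a b : ℝ}
    (hg : ∀ s ∈ Icc a b, ∀ t ∈ Icc a b, dist (α s) (α t) = |s - t|) :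
    InjOn α (Icc a b) := by
  intro s hs t ht hst
  have h0 : |s - t| = 0 := by rw [← hg s hs t ht, hst, dist_self]
  have := abs_eq_zero.mp h0
  linarith

lemma geo_isArc {α : ℝ → T} {a b : ℝ} {x y : T} (hab : a ≤ b)
    (hg : ∀ s ∈ Icc a b, ∀ t ∈ Icc a b, dist (α s) (α t) = |s - t|)
    (hx : α a = x) (hy : α b = y) : IsArcIn x y (α '' Icc a b) :=
  ⟨a, b, hab, α, geo_continuousOn hg, geo_injOn hg, rfl, hx, hy⟩

end Lemmas

section Lemmas2
variable {T : Type*} [MetricSpace T]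

lemma between_param (h : IsRTree T) (x y : T) :
    ∃ α : ℝ → T,
      (∀ s ∈ Icc (0:ℝ) (dist x y), ∀ t ∈ Icc (0:ℝ) (dist x y), dist (α s) (α t) = |s - t|) ∧
      α 0 = x ∧ α (dist x y) = y ∧
      ∀ m : T, dist x m + dist m y = dist x y → α (dist x m) = m := by
  obtain ⟨α, hα, hα0, hαD⟩ := exists_geo h x y
  refine ⟨α, hα, hα0, hαD, ?_⟩
  intro m hm
  have hs0 : (0:ℝ) ≤ dist x m := dist_nonneg
  have hmy0 : (0:ℝ) ≤ dist m y := dist_nonneg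
  have hsD : dist x m ≤ dist x y := by linarith
  obtain ⟨β, hβ, hβ0, hβs⟩ := exists_geo h x m
  obtain ⟨δ, hδ, hδ0, hδe⟩ := exists_geo h m y
  set s := dist x m with hsdef
  set D := dist x y with hDdef
  have hmy : dist m y = D - s := by linarith
  rw [hmy] at hδ hδe
  set γ : ℝ → T := fun t => if t ≤ s then β t else δ (t - s) with hγdef
  have hγx : γ 0 = x := by simp only [hγdef, if_pos hs0]; exact hβ0
  have hγm : γ s = m := by simp only [hγdef, if_pos (le_refl s)]; exact hβs
  have hγy : γ D = y := by
    by_cases hc : D ≤ s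
    · have hDs : s = D := le_antisymm hsD hc
      have hmyy : m = y := by
        have : dist m y = 0 := by rw [hmy, hDs]; ring
        exact dist_eq_zero.mp this
      simp only [hγdef, if_pos hc]
      rw [← hDs, hβs]; exact hmyy
    · simp only [hγdef, if_neg hc]
      exact hδe
  have key : ∀ u ∈ Icc (0:ℝ) D, ∀ v ∈ Icc (0:ℝ) D, u ≤ v → dist (γ u) (γ v) = v - u := by
    intro u hu v hv huv
    by_cases h1 : v ≤ s
    · have h2 : u ≤ s := le_trans huv h1
      simp only [hγdef, if_pos h2, if_pos h1]
      rw [hβ u ⟨hu.1, h2⟩ v ⟨hv.1, h1⟩, abs_sub_comm, abs_of_nonneg (by linarith)]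
    · push_neg at h1
      by_cases h2 : u ≤ s
      · simp only [hγdef, if_pos h2, if_neg (not_le.mpr h1)]
        have d1 : dist (β u) m = s - u := by
          rw [← hβs, hβ u ⟨hu.1, h2⟩ s ⟨hs0, le_refl s⟩, abs_sub_comm,
            abs_of_nonneg (by linarith)]
        have d2 : dist m (δ (v - s)) = v - s := by
          rw [← hδ0, hδ 0 ⟨le_refl 0, by linarith⟩ (v - s) ⟨by linarith, by linarith [hv.2]⟩,
            abs_sub_comm, abs_of_nonneg (by linarith)]
          ring
        have d3 : dist (δ (v - s)) y = D - v := by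
          rw [← hδe, hδ (v - s) ⟨by linarith, by linarith [hv.2]⟩ (D - s)
            ⟨by linarith, le_refl _⟩, abs_of_nonpos (by linarith [hv.2]), neg_sub]
          ring
        have dxu : dist x (β u) = u := by
          rw [← hβ0, hβ 0 ⟨le_refl 0, hs0⟩ u ⟨hu.1, h2⟩, abs_sub_comm,
            abs_of_nonneg (by linarith [hu.1])]
          ring
        have hup : dist (β u) (δ (v - s)) ≤ v - u := by
          calc dist (β u) (δ (v - s)) ≤ dist (β u) m + dist m (δ (v - s)) := dist_triangle _ _ _
          _ = v - u := by rw [d1, d2]; ring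
        have t1 : dist x (δ (v - s)) ≤ dist x (β u) + dist (β u) (δ (v - s)) :=
          dist_triangle _ _ _
        have t2 : dist x y ≤ dist x (δ (v - s)) + dist (δ (v - s)) y := dist_triangle _ _ _
        have : v - u ≤ dist (β u) (δ (v - s)) := by
          rw [d3] at t2; rw [dxu] at t1
          have : D ≤ dist x (δ (v - s)) + (D - v) := t2
          linarith
        linarith
      · push_neg at h2
        simp only [hγdef, if_neg (not_le.mpr h2), if_neg (not_le.mpr h1)]
        rw [hδ (u - s) ⟨by linarith, by linarith [hu.2]⟩ (v - s) ⟨by linarith, by linarith [hv.2]⟩,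
          abs_sub_comm, abs_of_nonneg (by linarith)]
        ring
  have hγgeo : ∀ u ∈ Icc (0:ℝ) D, ∀ v ∈ Icc (0:ℝ) D, dist (γ u) (γ v) = |u - v| := by
    intro u hu v hv
    rcases le_total u v with hc | hc
    · rw [key u hu v hv hc, abs_sub_comm, abs_of_nonneg (by linarith)]
    · rw [dist_comm, key v hv u hu hc, abs_of_nonneg (by linarith)]
  have hD0 : (0:ℝ) ≤ D := dist_nonneg
  have e1 := geo_isArc hD0 hα hα0 hαD
  have e2 := geo_isArc hD0 hγgeo hγx hγy
  have himeq : α '' Icc 0 D = γ '' Icc 0 D := (h x y).1.unique e1 e2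
  have hmm : m ∈ α '' Icc 0 D := by
    rw [himeq]; exact ⟨s, ⟨hs0, hsD⟩, hγm⟩
  obtain ⟨t, ht, hαt⟩ := hmm
  have hst : s = t := by
    rw [hsdef, ← hα0, ← hαt, hα 0 ⟨le_refl 0, hD0⟩ t ht, abs_sub_comm,
      abs_of_nonneg (by linarith [ht.1])]
    simp
  rw [hst]; exact hαt

end Lemmas2

section Lemmas3
variable {T : Type*} [MetricSpace T]

lemma between_unique (h : IsRTree T) {a b m m' : T}
    (h1 : dist a m + dist m b = dist a b) (h2 : dist a m' + dist m' b = dist a b)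
    (he : dist a m = dist a m') : m = m' := by
  obtain ⟨α, hα, h0, hD, hbp⟩ := between_param h a b
  have e1 := hbp m h1
  have e2 := hbp m' h2
  rw [he] at e1
  exact e1.symm.trans e2

lemma between_trans (h : IsRTree T) {a b m c : T}
    (h1 : dist a m + dist m b = dist a b) (h2 : dist a c + dist c b = dist a b)
    (hle : dist a m ≤ dist a c) : dist a m + dist m c = dist a c := by
  obtain ⟨α, hα, h0, hD, hbp⟩ := between_param h a b
  have e1 := hbp m h1
  have e2 := hbp c h2
  have hm1 : dist a m ∈ Icc (0:ℝ) (dist a b) :=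
    ⟨dist_nonneg, by linarith [dist_nonneg (x := m) (y := b)]⟩
  have hc1 : dist a c ∈ Icc (0:ℝ) (dist a b) :=
    ⟨dist_nonneg, by linarith [dist_nonneg (x := c) (y := b)]⟩
  have hd := hα _ hm1 _ hc1
  rw [e1, e2, abs_sub_comm, abs_of_nonneg (by linarith)] at hd
  linarith

end Lemmas3

section Lemmas4
variable {T : Type*} [MetricSpace T]

lemma proj_between (h : IsRTree T) (w : T) {β : ℝ → T} {D t₀ : ℝ}
    (hD : 0 ≤ D)
    (hβ : ∀ s ∈ Icc (0:ℝ) D, ∀ t ∈ Icc (0:ℝ) D, dist (β s) (β t) = |s - t|)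
    (ht₀ : t₀ ∈ Icc (0:ℝ) D)
    (hmin : ∀ t ∈ Icc (0:ℝ) D, dist w (β t₀) ≤ dist w (β t)) :
    dist w (β t₀) + dist (β t₀) (β 0) = dist w (β 0) := by
  obtain ⟨δ, hδ, hδ0, hδE⟩ := exists_geo h w (β t₀)
  set E := dist w (β t₀) with hEdef
  have hE0 : (0:ℝ) ≤ E := dist_nonneg
  have ht00 : 0 ≤ t₀ := ht₀.1
  have ht0D : t₀ ≤ D := ht₀.2
  set γ : ℝ → T := fun r =>
    if r ≤ E then δ (min E (max 0 r)) else β (min D (max 0 (t₀ - (r - E)))) with hγdef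
  have hv1 : ∀ r ∈ Icc (0:ℝ) E, γ r = δ r := by
    intro r hr
    simp only [hγdef, if_pos hr.2, max_eq_right hr.1, min_eq_right hr.2]
  have hv2 : ∀ r : ℝ, E < r → r ≤ E + t₀ → γ r = β (t₀ - (r - E)) := by
    intro r h1 h2
    have b1 : 0 ≤ t₀ - (r - E) := by linarith
    have b2 : t₀ - (r - E) ≤ D := by linarith
    simp only [hγdef, if_neg (not_le.mpr h1), max_eq_right b1, min_eq_right b2]
  have hcont : Continuous γ := by
    apply Continuous.if_le
    · apply (geo_continuousOn hδ).comp_continuous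
      · exact continuous_const.min (continuous_const.max continuous_id)
      · intro r
        exact ⟨le_min hE0 (le_max_left 0 r), min_le_left _ _⟩
    · apply (geo_continuousOn hβ).comp_continuous
      · fun_prop
      · intro r
        exact ⟨le_min hD (le_max_left _ _), min_le_left _ _⟩
    · exact continuous_id
    · exact continuous_const
    · intro r hr
      subst hr
      simp only [max_eq_right hE0, min_eq_right (le_refl E), sub_self, sub_zero,
        max_eq_right ht00, min_eq_right ht0D]
      rw [hδE]
  have hdWδ : ∀ r ∈ Icc (0:ℝ) E, dist w (δ r) = r := by
    intro r hr
    rw [← hδ0, hδ 0 ⟨le_refl 0, hE0⟩ r hr, abs_sub_comm, abs_of_nonneg (by linarith [hr.1])]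
    ring
  have hinj : InjOn γ (Icc 0 (E + t₀)) := by
    have cross : ∀ r r' : ℝ, 0 ≤ r → r ≤ E → E < r' → r' ≤ E + t₀ → γ r = γ r' → False := by
      intro r r' hr0 hrE hr'E hr'b heq
      rw [hv1 r ⟨hr0, hrE⟩, hv2 r' hr'E hr'b] at heq
      have hu' : t₀ - (r' - E) ∈ Icc (0:ℝ) D := ⟨by linarith, by linarith⟩
      have h1 : E ≤ dist w (β (t₀ - (r' - E))) := hmin _ hu'
      rw [← heq, hdWδ r ⟨hr0, hrE⟩] at h1
      have hrE' : r = E := le_antisymm hrE h1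
      subst hrE'
      rw [hδE] at heq
      have := geo_injOn hβ ht₀ hu' heq
      linarith
    intro r hr r' hr' heq
    rcases le_or_gt r E with h1 | h1 <;> rcases le_or_gt r' E with h2 | h2
    · rw [hv1 r ⟨hr.1, h1⟩, hv1 r' ⟨hr'.1, h2⟩] at heq
      exact geo_injOn hδ ⟨hr.1, h1⟩ ⟨hr'.1, h2⟩ heq
    · exact absurd heq (by intro hc; exact cross r r' hr.1 h1 h2 hr'.2 hc)
    · exact absurd heq.symm (by intro hc; exact cross r' r hr'.1 h2 h1 hr.2 hc)
    · rw [hv2 r h1 hr.2, hv2 r' h2 hr'.2] at heq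
      have b1 : t₀ - (r - E) ∈ Icc (0:ℝ) D := ⟨by linarith [hr.2], by linarith⟩
      have b2 : t₀ - (r' - E) ∈ Icc (0:ℝ) D := ⟨by linarith [hr'.2], by linarith⟩
      have := geo_injOn hβ b1 b2 heq
      linarith
  have hγ0 : γ 0 = w := by rw [hv1 0 ⟨le_refl 0, hE0⟩]; exact hδ0
  have hγend : γ (E + t₀) = β 0 := by
    rcases eq_or_lt_of_le ht00 with hz | hz
    · have : E + t₀ ≤ E := by linarith
      rw [hv1 (E + t₀) ⟨by linarith, this⟩]
      have : E + t₀ = E := by linarith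
      rw [this, hδE, ← hz]
    · rw [hv2 (E + t₀) (by linarith) (le_refl _)]
      congr 1
      ring
  have hArc : IsArcIn w (β 0) (γ '' Icc 0 (E + t₀)) :=
    ⟨0, E + t₀, by linarith, γ, hcont.continuousOn, hinj, rfl, hγ0, hγend⟩
  obtain ⟨a, b, hab, ε, hε, himg, hεa, hεb⟩ := (h w (β 0)).2 _ hArc
  have hcmem : β t₀ ∈ γ '' Icc 0 (E + t₀) := by
    refine ⟨E, ⟨hE0, by linarith⟩, ?_⟩
    rw [hv1 E ⟨hE0, le_refl E⟩]
    exact hδE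
  rw [← himg] at hcmem
  obtain ⟨ρ, hρ, hερ⟩ := hcmem
  have d1 : dist w (β t₀) = ρ - a := by
    rw [← hεa, ← hερ, hε a ⟨le_refl a, hab⟩ ρ hρ, abs_sub_comm, abs_of_nonneg (by linarith [hρ.1])]
  have d2 : dist (β t₀) (β 0) = b - ρ := by
    rw [← hεb, ← hερ, hε ρ hρ b ⟨hab, le_refl b⟩, abs_sub_comm, abs_of_nonneg (by linarith [hρ.2])]
  have d3 : dist w (β 0) = b - a := by
    rw [← hεa, ← hεb, hε a ⟨le_refl a, hab⟩ b ⟨hab, le_refl b⟩, abs_sub_comm,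
      abs_of_nonneg (by linarith)]
  rw [hEdef, d1, d2, d3]
  ring

end Lemmas4

section Lemmas5
variable {T : Type*} [MetricSpace T]

lemma median (h : IsRTree T) (u v w : T) :
    ∃ c : T, (dist u c + dist c v = dist u v) ∧ (dist w c + dist c u = dist w u) ∧
      (dist w c + dist c v = dist w v) := by
  obtain ⟨β, hβ, hβ0, hβD⟩ := exists_geo h u v
  set D := dist u v with hDdef
  have hD0 : (0:ℝ) ≤ D := dist_nonneg
  have hK : IsCompact (β '' Icc 0 D) := isCompact_Icc.image_of_continuousOn (geo_continuousOn hβ)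
  have hne : (β '' Icc 0 D).Nonempty := ⟨u, 0, ⟨le_refl 0, hD0⟩, hβ0⟩
  obtain ⟨c, hcK, hminOn⟩ :=
    hK.exists_isMinOn hne ((continuous_const.dist continuous_id).continuousOn)
  obtain ⟨t₀, ht₀, hct⟩ := hcK
  have hmin : ∀ t ∈ Icc (0:ℝ) D, dist w (β t₀) ≤ dist w (β t) := by
    intro t ht
    have := hminOn (Set.mem_image_of_mem β ht)
    rw [hct]
    exact this
  have s1 := proj_between h w hD0 hβ ht₀ hmin
  rw [hβ0] at s1
  set β' : ℝ → T := fun r => β (D - r) with hβ'def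
  have hβ' : ∀ s ∈ Icc (0:ℝ) D, ∀ t ∈ Icc (0:ℝ) D, dist (β' s) (β' t) = |s - t| := by
    intro s hs t ht
    simp only [hβ'def]
    rw [hβ (D - s) ⟨by linarith [hs.2], by linarith [hs.1]⟩ (D - t)
      ⟨by linarith [ht.2], by linarith [ht.1]⟩, abs_sub_comm]
    congr 1
    ring
  have ht₀' : D - t₀ ∈ Icc (0:ℝ) D := ⟨by linarith [ht₀.2], by linarith [ht₀.1]⟩
  have he1 : β' (D - t₀) = β t₀ := by simp only [hβ'def]; congr 1; ring
  have hmin' : ∀ t ∈ Icc (0:ℝ) D, dist w (β' (D - t₀)) ≤ dist w (β' t) := by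
    intro t ht
    rw [he1]
    exact hmin (D - t) ⟨by linarith [ht.2], by linarith [ht.1]⟩
  have s2 := proj_between h w hD0 hβ' ht₀' hmin'
  rw [he1] at s2
  have he2 : β' 0 = v := by simp only [hβ'def, sub_zero]; exact hβD
  rw [he2] at s2
  refine ⟨β t₀, ?_, s1, s2⟩
  rw [← hβ0, ← hβD, hβ 0 ⟨le_refl 0, hD0⟩ t₀ ht₀, hβ t₀ ht₀ D ⟨hD0, le_refl D⟩,
    abs_sub_comm, abs_of_nonneg (by linarith [ht₀.1]), abs_sub_comm,
    abs_of_nonneg (by linarith [ht₀.2])]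
  ring

end Lemmas5

section Lemmas6
variable {T : Type*} [MetricSpace T]

lemma displacement_half (h : IsRTree T) (φ : T ≃ᵢ T) (p y q : T)
    (hB : dist p (φ p) + dist (φ p) (φ (φ p)) = dist p (φ (φ p)))
    (hq1 : dist p q + dist q (φ (φ p)) = dist p (φ (φ p)))
    (hq3 : dist y q + dist q (φ (φ p)) = dist y (φ (φ p)))
    (hs : dist p q ≤ dist p (φ p)) :
    dist p (φ p) ≤ dist y (φ y) := by
  have hL2 : dist (φ p) (φ (φ p)) = dist p (φ p) := φ.dist_eq p (φ p)
  have hpq : dist p q + dist q (φ p) = dist p (φ p) := between_trans h hq1 hB hs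
  have hfq2 : dist (φ q) (φ (φ p)) = dist p (φ p) - dist p q := by
    rw [φ.dist_eq]
    linarith
  have t3 : dist y (φ (φ p)) ≤ dist y (φ q) + dist (φ q) (φ (φ p)) := dist_triangle _ _ _
  have t4 : dist y (φ q) ≤ dist y (φ y) + dist (φ y) (φ q) := dist_triangle _ _ _
  have h5 : dist (φ y) (φ q) = dist y q := φ.dist_eq y q
  linarith

lemma displacement (h : IsRTree T) (φ : T ≃ᵢ T) (p : T)
    (hB : dist p (φ p) + dist (φ p) (φ (φ p)) = dist p (φ (φ p))) :
    ∀ y : T, dist p (φ p) ≤ dist y (φ y) := by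
  intro y
  obtain ⟨q, hq1, hq2, hq3⟩ := median h p (φ (φ p)) y
  rcases le_total (dist p q) (dist p (φ p)) with hs | hs
  · exact displacement_half h φ p y q hB hq1 hq3 hs
  · have e1 : φ.symm (φ (φ p)) = φ p := φ.symm_apply_apply (φ p)
    have e2 : φ.symm (φ.symm (φ (φ p))) = p := by rw [e1]; exact φ.symm_apply_apply p
    have hL2 : dist (φ p) (φ (φ p)) = dist p (φ p) := φ.dist_eq p (φ p)
    have hB' : dist (φ (φ p)) (φ.symm (φ (φ p))) +
        dist (φ.symm (φ (φ p))) (φ.symm (φ.symm (φ (φ p)))) =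
        dist (φ (φ p)) (φ.symm (φ.symm (φ (φ p)))) := by
      rw [e1, φ.symm_apply_apply p]
      linarith [dist_comm p (φ p), dist_comm (φ p) (φ (φ p)), dist_comm p (φ (φ p)), hB]
    have hq1' : dist (φ (φ p)) q + dist q (φ.symm (φ.symm (φ (φ p)))) =
        dist (φ (φ p)) (φ.symm (φ.symm (φ (φ p)))) := by
      rw [e2]
      linarith [dist_comm p q, dist_comm q (φ (φ p)), dist_comm p (φ (φ p)), hq1]
    have hq3' : dist y q + dist q (φ.symm (φ.symm (φ (φ p)))) =
        dist y (φ.symm (φ.symm (φ (φ p)))) := by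
      rw [e2]
      linarith [dist_comm q p, hq2]
    have hs' : dist (φ (φ p)) q ≤ dist (φ (φ p)) (φ.symm (φ (φ p))) := by
      rw [e1]
      have : dist (φ (φ p)) (φ p) = dist p (φ p) := by
        rw [dist_comm]; exact hL2
      linarith [dist_comm q (φ (φ p)), hq1]
    have key := displacement_half h φ.symm (φ (φ p)) y q hB' hq1' hq3' hs'
    rw [e1] at key
    have e3 : dist y (φ.symm y) = dist y (φ y) := by
      rw [← φ.dist_eq y (φ.symm y), φ.apply_symm_apply, dist_comm]
    have e4 : dist (φ (φ p)) (φ p) = dist p (φ p) := by rw [dist_comm]; exact hL2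
    linarith

end Lemmas6

/-- An elliptic isometry of an ℝ-tree (i.e. with `ℓ(φ) = 0`) fixes a non-empty subtree:
its fixed-point set is nonempty, closed, and connected. -/
theorem fixedSet_of_elliptic {T : Type*} [MetricSpace T] [Nonempty T]
    (h : IsRTree T) (φ : T ≃ᵢ T) (hl : translationLength (⇑φ) = 0) :
    ({x : T | φ x = x}).Nonempty ∧ IsClosed {x : T | φ x = x} ∧
      IsConnected {x : T | φ x = x} := by
  have hfix : ∃ z : T, φ z = z := by
    obtain ⟨x⟩ := ‹Nonempty T›
    by_cases hd : dist x (φ x) = 0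
    · exact ⟨x, (dist_eq_zero.mp hd).symm⟩
    · set d := dist x (φ x) with hddef
      have hdpos : 0 < d := lt_of_le_of_ne dist_nonneg (Ne.symm hd)
      obtain ⟨c, hc1, hc2, hc3⟩ := median h x (φ (φ x)) (φ x)
      set k := dist (φ x) c with hkdef
      have hk0 : (0:ℝ) ≤ k := dist_nonneg
      have hd2 : dist (φ x) (φ (φ x)) = d := φ.dist_eq x (φ x)
      have hxc : dist x c = d - k := by
        have := dist_comm (φ x) x
        have := dist_comm c x
        linarith [hc2]
      have hkd : k ≤ d := by linarith [dist_nonneg (x := x) (y := c)]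
      by_cases hcase : d ≤ 2 * k
      · -- midpoint of [x, φ x] is fixed
        obtain ⟨α, hα, hα0, hαd, hbp⟩ := between_param h x (φ x)
        set m := α (d / 2) with hmdef
        have hmem : d / 2 ∈ Icc (0:ℝ) d := ⟨by linarith, by linarith⟩
        have hm1 : dist x m = d / 2 := by
          rw [hmdef, ← hα0, hα 0 ⟨le_refl 0, by linarith⟩ (d / 2) hmem, abs_sub_comm,
            abs_of_nonneg (by linarith)]
          ring
        have hm2 : dist m (φ x) = d / 2 := by
          rw [hmdef, ← hαd, hα (d / 2) hmem d ⟨by linarith, le_refl d⟩, abs_sub_comm,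
            abs_of_nonneg (by linarith)]
          ring
        have hBm : dist x m + dist m (φ x) = dist x (φ x) := by
          rw [hm1, hm2, ← hddef]; ring
        have h1 : dist (φ x) m + dist m x = dist (φ x) x := by
          linarith [dist_comm x m, dist_comm m (φ x), dist_comm x (φ x), hBm]
        have h3 : dist (φ x) m ≤ dist (φ x) c := by
          rw [← hkdef]
          have : dist (φ x) m = d / 2 := by rw [dist_comm]; exact hm2
          linarith
        have hmc := between_trans h h1 hc2 h3
        have hBm2 : dist (φ x) m + dist m (φ (φ x)) = dist (φ x) (φ (φ x)) := by
          have t1 : dist (φ x) (φ (φ x)) ≤ dist (φ x) m + dist m (φ (φ x)) :=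
            dist_triangle _ _ _
          have t2 : dist m (φ (φ x)) ≤ dist m c + dist c (φ (φ x)) := dist_triangle _ _ _
          linarith [hc3]
        have hBφm : dist (φ x) (φ m) + dist (φ m) (φ (φ x)) = dist (φ x) (φ (φ x)) := by
          rw [φ.dist_eq, φ.dist_eq, hd2]
          exact hBm
        have heq : dist (φ x) m = dist (φ x) (φ m) := by
          have ha : dist (φ x) m = d / 2 := by rw [dist_comm]; exact hm2
          have hb : dist (φ x) (φ m) = d / 2 := by rw [φ.dist_eq]; exact hm1
          rw [ha, hb]
        exact ⟨m, (between_unique h hBm2 hBφm heq).symm⟩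
      · push_neg at hcase
        exfalso
        have f1 : dist (φ x) (φ c) = d - k := by rw [φ.dist_eq]; exact hxc
        have hφc2 : dist (φ x) (φ c) + dist (φ c) (φ (φ x)) = dist (φ x) (φ (φ x)) := by
          rw [φ.dist_eq, φ.dist_eq]
          linarith [dist_comm x c, dist_comm c (φ x), dist_comm x (φ x), hc2]
        have f2 := between_trans h hc3 hφc2 (by rw [← hkdef, f1]; linarith)
        have fL : dist c (φ c) = d - 2 * k := by
          rw [← hkdef, f1] at f2
          linarith
        have g1 : dist (φ c) (φ (φ x)) = k := by
          rw [φ.dist_eq, dist_comm]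
        have g2 : dist c (φ (φ x)) = d - k := by linarith [hc3, hd2]
        have g3 : dist x (φ (φ x)) = 2 * d - 2 * k := by linarith [hc1, hxc]
        -- B x c (φ c):
        have t1 : dist x (φ c) ≤ dist x c + dist c (φ c) := dist_triangle _ _ _
        have t2 : dist x (φ (φ x)) ≤ dist x (φ c) + dist (φ c) (φ (φ x)) := dist_triangle _ _ _
        have hxφc : dist x (φ c) = 2 * d - 3 * k := by linarith
        -- φ image: B φx φc φ²c
        have hφ2 : dist (φ x) (φ c) + dist (φ c) (φ (φ c)) = dist (φ x) (φ (φ c)) := by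
          rw [φ.dist_eq, φ.dist_eq, φ.dist_eq]
          linarith [hxc, fL, hxφc]
        have fL2 : dist (φ c) (φ (φ c)) = d - 2 * k := by rw [φ.dist_eq]; exact fL
        have t3 : dist c (φ (φ c)) ≤ dist c (φ c) + dist (φ c) (φ (φ c)) := dist_triangle _ _ _
        have t4 : dist (φ x) (φ (φ c)) ≤ dist (φ x) c + dist c (φ (φ c)) := dist_triangle _ _ _
        have hBc : dist c (φ c) + dist (φ c) (φ (φ c)) = dist c (φ (φ c)) := by
          rw [← hkdef] at t4
          linarith [f1]
        have hdisp := displacement h φ c hBc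
        have hlb : (d - 2 * k : ℝ) ≤ translationLength (⇑φ) := by
          rw [translationLength]
          apply le_ciInf
          intro z
          rw [← fL]
          exact hdisp z
        rw [hl] at hlb
        linarith
  obtain ⟨x₀, hx₀⟩ := hfix
  have hx₀' : x₀ ∈ {x : T | φ x = x} := hx₀
  refine ⟨⟨x₀, hx₀⟩, isClosed_eq φ.continuous continuous_id, ⟨x₀, hx₀⟩, ?_⟩
  apply isPreconnected_of_forall x₀
  intro y hy
  have hyfix : φ y = y := hy
  obtain ⟨α, hα, hα0, hαD, hbp⟩ := between_param h x₀ y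
  set D := dist x₀ y with hDdef
  have hD0 : (0:ℝ) ≤ D := dist_nonneg
  refine ⟨α '' Icc 0 D, ?_, ⟨0, ⟨le_refl 0, hD0⟩, hα0⟩, ⟨D, ⟨hD0, le_refl D⟩, hαD⟩,
    (isPreconnected_Icc).image α (geo_continuousOn hα)⟩
  rintro z ⟨t, ht, rfl⟩
  show φ (α t) = α t
  have hd1 : dist x₀ (α t) = t := by
    rw [← hα0, hα 0 ⟨le_refl 0, hD0⟩ t ht, abs_sub_comm, abs_of_nonneg (by linarith [ht.1])]
    ring
  have hd2 : dist (α t) y = D - t := by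
    rw [← hαD, hα t ht D ⟨hD0, le_refl D⟩, abs_sub_comm, abs_of_nonneg (by linarith [ht.2])]
  have hB : dist x₀ (α t) + dist (α t) y = dist x₀ y := by
    rw [hd1, hd2, ← hDdef]; ring
  have e : dist x₀ (φ (α t)) = dist x₀ (α t) := by
    calc dist x₀ (φ (α t)) = dist (φ x₀) (φ (α t)) := by rw [hx₀]
    _ = dist x₀ (α t) := φ.dist_eq _ _
  have e' : dist (φ (α t)) y = dist (α t) y := by
    calc dist (φ (α t)) y = dist (φ (α t)) (φ y) := by rw [hyfix]
    _ = dist (α t) y := φ.dist_eq _ _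
  have hBφ : dist x₀ (φ (α t)) + dist (φ (α t)) y = dist x₀ y := by
    rw [e, e']; exact hB
  have e1 := hbp (α t) hB
  have e2 := hbp (φ (α t)) hBφ
  rw [e] at e2
  exact e2.symm.trans e1
end

section
/- Let φ and ψ be isometries of an ℝ-tree T onto itself, both elliptic (ℓ(φ) = ℓ(ψ) = 0), and suppose their fixed-point sets Fix(φ) = {x : φ(x) = x} and Fix(ψ) = {x : ψ(x) = x} are disjoint. Then the composition ψ ∘ φ is hyperbolic, and ℓ(ψ ∘ φ) = 2·D, where D = inf{ d(x,y) : x ∈ Fix(φ), y ∈ Fix(ψ) } is the distance between Fix(φ) and Fix(ψ). -/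
namespace RTreeAux

open Set

variable {T : Type*} [MetricSpace T]

/-- geodesic parametrization on `[0, L]` -/
def IsGeo (α : ℝ → T) (L : ℝ) : Prop :=
  ∀ s ∈ Icc (0:ℝ) L, ∀ t ∈ Icc (0:ℝ) L, dist (α s) (α t) = |s - t|

lemma IsGeo.continuousOn {α : ℝ → T} {L : ℝ} (hα : IsGeo α L) :
    ContinuousOn α (Icc 0 L) := by
  have : LipschitzOnWith 1 α (Icc 0 L) := by
    apply LipschitzOnWith.of_dist_le_mul
    intro s hs t ht
    rw [hα s hs t ht, Real.dist_eq]
    simp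
  exact this.continuousOn

lemma IsGeo.injOn {α : ℝ → T} {L : ℝ} (hα : IsGeo α L) :
    InjOn α (Icc 0 L) := by
  intro s hs t ht hst
  have := hα s hs t ht
  rw [hst, dist_self] at this
  have := abs_eq_zero.mp this.symm
  linarith [sub_eq_zero.mp this]

lemma IsGeo.arc {α : ℝ → T} {L : ℝ} {x y : T} (hL : 0 ≤ L) (hα : IsGeo α L)
    (h0 : α 0 = x) (h1 : α L = y) : IsArcIn x y (α '' Icc 0 L) :=
  ⟨0, L, hL, α, hα.continuousOn, hα.injOn, rfl, h0, h1⟩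

lemma exists_geo (h : IsRTree T) (x y : T) :
    ∃ α : ℝ → T, IsGeo α (dist x y) ∧ α 0 = x ∧ α (dist x y) = y := by
  obtain ⟨S, hS, -⟩ := (h x y).1
  obtain ⟨a, b, hab, α, hiso, him, ha, hb⟩ := (h x y).2 S hS
  have hd : dist x y = b - a := by
    have := hiso a ⟨le_refl a, hab⟩ b ⟨hab, le_refl b⟩
    rw [ha, hb] at this
    rw [this, abs_of_nonpos (by linarith), neg_sub]
  refine ⟨fun t => α (a + t), ?_, by simpa using ha, ?_⟩
  · intro s hs t ht
    rw [hd] at hs ht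
    have := hiso (a + s) ⟨by linarith [hs.1], by linarith [hs.2]⟩
      (a + t) ⟨by linarith [ht.1], by linarith [ht.2]⟩
    rw [this]
    congr 1
    ring
  · rw [hd]
    simpa using hb

/-- the standard geodesic parametrization from `x` to `y`, with clamped parameter -/
noncomputable def rpt (h : IsRTree T) (x y : T) (t : ℝ) : T :=
  (exists_geo h x y).choose (max 0 (min t (dist x y)))

variable (h : IsRTree T)

lemma clamp_eq {d t : ℝ} (ht : t ∈ Icc 0 d) : max 0 (min t d) = t := by
  rw [min_eq_left ht.2, max_eq_right ht.1]

lemma clamp_mem (d t : ℝ) (hd : 0 ≤ d) : max 0 (min t d) ∈ Icc 0 d := by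
  exact ⟨le_max_left _ _, max_le hd (min_le_right _ _)⟩

lemma rpt_dist {x y : T} {s t : ℝ} (hs : s ∈ Icc 0 (dist x y)) (ht : t ∈ Icc 0 (dist x y)) :
    dist (rpt h x y s) (rpt h x y t) = |s - t| := by
  unfold rpt
  rw [clamp_eq hs, clamp_eq ht]
  exact (exists_geo h x y).choose_spec.1 s hs t ht

lemma rpt_zero (x y : T) : rpt h x y 0 = x := by
  unfold rpt
  rw [clamp_eq ⟨le_refl 0, dist_nonneg⟩]
  exact (exists_geo h x y).choose_spec.2.1

lemma rpt_last (x y : T) : rpt h x y (dist x y) = y := by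
  unfold rpt
  rw [clamp_eq ⟨dist_nonneg, le_refl _⟩]
  exact (exists_geo h x y).choose_spec.2.2

lemma dist_rpt_left {x y : T} {t : ℝ} (ht : t ∈ Icc 0 (dist x y)) :
    dist x (rpt h x y t) = t := by
  have e : dist x (rpt h x y t) = dist (rpt h x y 0) (rpt h x y t) := by rw [rpt_zero]
  rw [e, rpt_dist h ⟨le_refl 0, dist_nonneg⟩ ht, abs_of_nonpos (by linarith [ht.1]), neg_sub,
    sub_zero]

lemma dist_rpt_right {x y : T} {t : ℝ} (ht : t ∈ Icc 0 (dist x y)) :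
    dist (rpt h x y t) y = dist x y - t := by
  have e : dist (rpt h x y t) y = dist (rpt h x y t) (rpt h x y (dist x y)) := by rw [rpt_last]
  rw [e, rpt_dist h ht ⟨dist_nonneg, le_refl _⟩, abs_of_nonpos (by linarith [ht.2]), neg_sub]

lemma rpt_lipschitz (x y : T) : LipschitzWith 1 (rpt h x y) := by
  apply LipschitzWith.of_dist_le_mul
  intro s t
  have hd : (0:ℝ) ≤ dist x y := dist_nonneg
  have h1 : dist (rpt h x y s) (rpt h x y t)
      = |max 0 (min s (dist x y)) - max 0 (min t (dist x y))| := by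
    unfold rpt
    exact (exists_geo h x y).choose_spec.1 _ (clamp_mem _ _ hd) _ (clamp_mem _ _ hd)
  rw [h1, NNReal.coe_one, one_mul, Real.dist_eq]
  set d := dist x y
  have h2 : |min s d - min t d| ≤ |s - t| := by
    rcases le_total s d with h'|h' <;> rcases le_total t d with h2|h2 <;>
      simp [min_def, *] <;> rw [abs_le] <;> constructor <;>
      cases abs_cases (s - t) <;> linarith
  calc |max 0 (min s d) - max 0 (min t d)| = |min s d ⊔ 0 - min t d ⊔ 0| := by
        rw [sup_comm (min s d), sup_comm (min t d)]
  _ ≤ |min s d - min t d| := abs_max_sub_max_le_abs _ _ _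
  _ ≤ |s - t| := h2

lemma rpt_continuous (x y : T) : Continuous (rpt h x y) :=
  (rpt_lipschitz h x y).continuous

/-- any geodesic parametrization from `x` to `y` agrees with the standard one -/
lemma geo_spec {x y : T} {α : ℝ → T} {L : ℝ} (hL : 0 ≤ L) (hα : IsGeo α L)
    (h0 : α 0 = x) (h1 : α L = y) :
    L = dist x y ∧ ∀ t ∈ Icc (0:ℝ) L, α t = rpt h x y t := by
  have hLd : L = dist x y := by
    have := hα 0 ⟨le_refl 0, hL⟩ L ⟨hL, le_refl L⟩
    rw [h0, h1] at this
    rw [this, abs_of_nonpos (by linarith), neg_sub, sub_zero]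
  subst hLd
  set β := (exists_geo h x y).choose with hβ
  obtain ⟨hβg, hβ0, hβ1⟩ := (exists_geo h x y).choose_spec
  obtain ⟨S, hS, huniq⟩ := (h x y).1
  have e1 : α '' Icc 0 (dist x y) = S := huniq _ (hα.arc hL h0 h1)
  have e2 : β '' Icc 0 (dist x y) = S := huniq _ (hβg.arc hL hβ0 hβ1)
  refine ⟨rfl, fun t ht => ?_⟩
  have : α t ∈ β '' Icc 0 (dist x y) := by
    rw [e2, ← e1]; exact mem_image_of_mem α ht
  obtain ⟨s, hs, hst⟩ := this
  have hds : dist x (β s) = s := by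
    conv_lhs => rw [← hβ0]
    rw [hβg 0 ⟨le_refl 0, hL⟩ s hs, abs_of_nonpos (by linarith [hs.1]), neg_sub, sub_zero]
  have hdt : dist x (α t) = t := by
    conv_lhs => rw [← h0]
    rw [hα 0 ⟨le_refl 0, hL⟩ t ht, abs_of_nonpos (by linarith [ht.1]), neg_sub, sub_zero]
  have : s = t := by rw [← hds, hst, hdt]
  rw [← hst, this]
  unfold rpt
  rw [clamp_eq ht]


/-- a point metrically between `x` and `y` lies on the standard geodesic -/
lemma between_pt {x y p : T} (hb : dist x p + dist p y = dist x y) :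
    rpt h x y (dist x p) = p := by
  set d1 := dist x p with hd1
  set d2 := dist p y with hd2
  have hd1n : (0:ℝ) ≤ d1 := dist_nonneg
  have hd2n : (0:ℝ) ≤ d2 := dist_nonneg
  classical
  set β : ℝ → T := fun t => if t ≤ d1 then rpt h x p t else rpt h p y (t - d1) with hβ
  have hgeo : IsGeo β (dist x y) := by
    intro s hs t ht
    rw [← hb] at hs ht
    have key : ∀ s t : ℝ, s ∈ Icc 0 (d1 + d2) → t ∈ Icc 0 (d1 + d2) → s ≤ t →
        dist (β s) (β t) = |s - t| := by
      intro s t hs ht hst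
      rcases le_or_gt t d1 with h1|h1
      · simp only [hβ, if_pos (le_trans hst h1), if_pos h1]
        exact rpt_dist h ⟨hs.1, le_trans hst h1⟩ ⟨ht.1, h1⟩
      rcases le_or_gt s d1 with h2|h2
      · simp only [hβ, if_pos h2, if_neg (not_le.mpr h1)]
        have hsm : s ∈ Icc 0 d1 := ⟨hs.1, h2⟩
        have htm : t - d1 ∈ Icc 0 d2 := ⟨by linarith, by linarith [ht.2]⟩
        have hub : dist (rpt h x p s) (rpt h p y (t - d1)) ≤ t - s := by
          calc dist (rpt h x p s) (rpt h p y (t - d1))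
              ≤ dist (rpt h x p s) p + dist p (rpt h p y (t - d1)) := dist_triangle _ _ _
          _ = (d1 - s) + (t - d1) := by
              rw [dist_rpt_right h hsm, dist_rpt_left h htm]
          _ = t - s := by ring
        have hlb : t - s ≤ dist (rpt h x p s) (rpt h p y (t - d1)) := by
          have t1 : dist x y ≤ dist x (rpt h x p s) + dist (rpt h x p s) (rpt h p y (t - d1))
              + dist (rpt h p y (t - d1)) y := dist_triangle4 _ _ _ _
          rw [dist_rpt_left h hsm, dist_rpt_right h htm, ← hb] at t1
          linarith
        rw [abs_of_nonpos (by linarith), neg_sub]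
        linarith
      · simp only [hβ, if_neg (not_le.mpr h2), if_neg (not_le.mpr h1)]
        have := rpt_dist h (x := p) (y := y) (s := s - d1) (t := t - d1)
          ⟨by linarith, by linarith [hs.2]⟩ ⟨by linarith, by linarith [ht.2]⟩
        rw [this]
        congr 1
        ring
    rcases le_total s t with hst|hst
    · exact key s t hs ht hst
    · rw [dist_comm, key t s ht hs hst, abs_sub_comm]
  have h0 : β 0 = x := by
    simp only [hβ, if_pos hd1n]
    exact rpt_zero h x p
  have h1 : β (dist x y) = y := by
    rw [← hb]
    rcases eq_or_lt_of_le hd2n with h2|h2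
    · have hpy : p = y := dist_eq_zero.mp h2.symm
      have e : d1 + d2 = d1 := by rw [← h2]; ring
      rw [e]
      show (if d1 ≤ d1 then rpt h x p d1 else rpt h p y (d1 - d1)) = y
      rw [if_pos le_rfl, ← hpy]
      show rpt h x p (dist x p) = p
      exact rpt_last h x p
    · show (if d1 + d2 ≤ d1 then rpt h x p (d1 + d2) else rpt h p y (d1 + d2 - d1)) = y
      rw [if_neg (by intro hc; linarith), show d1 + d2 - d1 = d2 from by ring]
      show rpt h p y (dist p y) = y
      exact rpt_last h p y
  have := (geo_spec h (by rw [← hb]; linarith) hgeo h0 h1).2 d1 ⟨hd1n, by rw [← hb]; linarith⟩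
  rw [← this]
  show (if d1 ≤ d1 then rpt h x p d1 else rpt h p y (d1 - d1)) = p
  rw [if_pos le_rfl]
  show rpt h x p (dist x p) = p
  exact rpt_last h x p

/-- initial segments: if `p` is between `x` and `y` then the geodesics agree up to `p` -/
lemma pt_sub {x y p : T} (hb : dist x p + dist p y = dist x y) {r : ℝ}
    (hr : r ∈ Icc 0 (dist x p)) : rpt h x y r = rpt h x p r := by
  set q := rpt h x p r with hq
  have hq1 : dist x q = r := dist_rpt_left h hr
  have hq2 : dist q p = dist x p - r := by
    have := dist_rpt_right h hr
    rwa [← hq] at this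
  have hq3 : dist q y ≤ dist x y - r := by
    calc dist q y ≤ dist q p + dist p y := dist_triangle _ _ _
    _ = dist x y - r := by rw [hq2]; linarith
  have hq4 : dist x y - r ≤ dist q y := by
    have := dist_triangle x q y
    linarith [hq1]
  have : dist x q + dist q y = dist x y := by linarith
  have := between_pt h this
  rwa [hq1] at this

lemma pt_rev {x y : T} {t : ℝ} (ht : t ∈ Icc 0 (dist x y)) :
    rpt h x y t = rpt h y x (dist x y - t) := by
  set p := rpt h x y t with hp
  have h1 : dist y p = dist x y - t := by rw [hp, dist_comm]; exact dist_rpt_right h ht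
  have h2 : dist p x = t := by rw [dist_comm]; exact dist_rpt_left h ht
  have hb : dist y p + dist p x = dist y x := by rw [h1, h2, dist_comm]; ring
  have := between_pt h hb
  rw [h1] at this
  exact this.symm

/-- the tripod lemma: the Gromov product is realized by a center point -/
lemma tripod (x y z : T) :
    0 ≤ gromovProd x y z ∧ gromovProd x y z ≤ dist x y ∧ gromovProd x y z ≤ dist x z ∧
    rpt h x y (gromovProd x y z) = rpt h x z (gromovProd x y z) := by
  classical
  set d1 := dist x y with hd1
  set d2 := dist x z with hd2
  set m := min d1 d2 with hm
  have hmn : (0:ℝ) ≤ m := le_min dist_nonneg dist_nonneg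
  set A : Set ℝ := Icc 0 m ∩ {t | rpt h x y t = rpt h x z t} with hA
  have hAne : A.Nonempty := ⟨0, ⟨le_refl 0, hmn⟩, by simp [rpt_zero]⟩
  have hAbdd : BddAbove A := ⟨m, fun t ht => ht.1.2⟩
  have hAclosed : IsClosed A :=
    isClosed_Icc.inter (isClosed_eq (rpt_continuous h x y) (rpt_continuous h x z))
  set ts := sSup A with hts
  have htsA : ts ∈ A := hAclosed.csSup_mem hAne hAbdd
  have hts0 : 0 ≤ ts := htsA.1.1
  have htsm : ts ≤ m := htsA.1.2
  set c := rpt h x y ts with hc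
  have hceq : rpt h x z ts = c := htsA.2.symm
  have hts1 : ts ∈ Icc 0 d1 := ⟨hts0, le_trans htsm (min_le_left _ _)⟩
  have hts2 : ts ∈ Icc 0 d2 := ⟨hts0, le_trans htsm (min_le_right _ _)⟩
  -- no agreement beyond ts
  have nomore : ∀ s, ts < s → s ≤ m → rpt h x y s ≠ rpt h x z s := by
    intro s hlt hsm heq
    set L := s - ts with hL
    have hL0 : 0 ≤ L := by linarith
    set α : ℝ → T := fun r => rpt h x y (ts + r) with hα
    set β' : ℝ → T := fun r => rpt h x z (ts + r) with hβ'
    have hs1 : s ∈ Icc 0 d1 := ⟨by linarith, le_trans hsm (min_le_left _ _)⟩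
    have hs2 : s ∈ Icc 0 d2 := ⟨by linarith, le_trans hsm (min_le_right _ _)⟩
    have hαg : IsGeo α L := by
      intro u hu v hv
      have := rpt_dist h (x := x) (y := y) (s := ts + u) (t := ts + v)
        ⟨by linarith [hu.1], by linarith [hu.2, hs1.2]⟩
        ⟨by linarith [hv.1], by linarith [hv.2, hs1.2]⟩
      rw [hα]; rw [this]; congr 1; ring
    have hβg : IsGeo β' L := by
      intro u hu v hv
      have := rpt_dist h (x := x) (y := z) (s := ts + u) (t := ts + v)
        ⟨by linarith [hu.1], by linarith [hu.2, hs2.2]⟩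
        ⟨by linarith [hv.1], by linarith [hv.2, hs2.2]⟩
      rw [hβ']; rw [this]; congr 1; ring
    have htsL : ts + L = s := by rw [hL]; ring
    have hα0 : α 0 = c := by show rpt h x y (ts + 0) = c; rw [add_zero]
    have hαL : α L = rpt h x y s := by show rpt h x y (ts + L) = rpt h x y s; rw [htsL]
    have hβ0 : β' 0 = c := by show rpt h x z (ts + 0) = c; rw [add_zero]; exact hceq
    have hβL : β' L = rpt h x y s := by
      show rpt h x z (ts + L) = rpt h x y s
      rw [htsL]
      exact heq.symm
    have s1 := geo_spec h hL0 hαg hα0 hαL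
    have s2 := geo_spec h hL0 hβg hβ0 hβL
    have hmid : ts + L / 2 ∈ A := by
      constructor
      · exact ⟨by linarith, by linarith⟩
      · show rpt h x y (ts + L/2) = rpt h x z (ts + L/2)
        have e1' : rpt h x y (ts + L/2) = rpt h c (rpt h x y s) (L/2) :=
          s1.2 (L/2) ⟨by linarith, by linarith⟩
        have e2' : rpt h x z (ts + L/2) = rpt h c (rpt h x y s) (L/2) :=
          s2.2 (L/2) ⟨by linarith, by linarith⟩
        rw [e1', e2']
    have := le_csSup hAbdd hmid
    rw [← hts] at this
    linarith
  -- concatenated path from y to z through c is an arc, hence a geodesic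
  set L1 := d1 - ts with hL1
  set L2 := d2 - ts with hL2
  set L := L1 + L2 with hLdef
  have hL10 : 0 ≤ L1 := by simp [hL1]; linarith [hts1.2]
  have hL20 : 0 ≤ L2 := by simp [hL2]; linarith [hts2.2]
  set γ : ℝ → T := fun u => if u ≤ L1 then rpt h x y (d1 - u) else rpt h x z (ts + (u - L1))
    with hγ
  have hγ0 : γ 0 = y := by
    rw [hγ]; simp only [if_pos hL10]
    rw [sub_zero]; exact rpt_last h x y
  have hγL : γ L = z := by
    rcases eq_or_lt_of_le hL20 with h2|h2
    · rw [hγ]; simp only [hLdef, ← h2, add_zero, if_pos (le_refl L1)]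
      have : d1 - L1 = ts := by simp [hL1]
      rw [this]
      have : d2 = ts := by simp [hL2] at h2; linarith
      rw [htsA.2, ← this]
      exact rpt_last h x z
    · rw [hγ]
      have : ¬ (L ≤ L1) := by simp [hLdef]; linarith
      simp only [if_neg this]
      have e : ts + (L - L1) = d2 := by rw [hLdef, hL2]; ring
      rw [e]
      show rpt h x z (dist x z) = z
      exact rpt_last h x z
  have hcont : Continuous γ := by
    apply Continuous.if_le
    · exact (rpt_continuous h x y).comp (continuous_const.sub continuous_id)
    · exact (rpt_continuous h x z).comp (continuous_const.add (continuous_id.sub continuous_const))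
    · exact continuous_id
    · exact continuous_const
    · intro u hu
      rw [hu]
      have e1 : d1 - L1 = ts := by simp [hL1]
      have e2 : ts + (L1 - L1) = ts := by ring
      rw [e1, e2, htsA.2]
  have hinj : InjOn γ (Icc 0 L) := by
    have key : ∀ u ∈ Icc (0:ℝ) L, ∀ v ∈ Icc (0:ℝ) L, u < v → γ u ≠ γ v := by
      intro u hu v hv hlt heq
      rcases le_or_gt v L1 with h1|h1
      · have h2 : u ≤ L1 := le_of_lt (lt_of_lt_of_le hlt h1)
        rw [hγ] at heq
        simp only [if_pos h1, if_pos h2] at heq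
        have hu1 : d1 - u ∈ Icc 0 d1 := ⟨by linarith [hts1.1], by linarith [hu.1]⟩
        have hv1 : d1 - v ∈ Icc 0 d1 := ⟨by linarith [hts1.1], by linarith [hv.1]⟩
        have hdd := rpt_dist h hu1 hv1
        rw [heq, dist_self] at hdd
        have := abs_eq_zero.mp hdd.symm
        have : u = v := by cases abs_cases ((d1-u) - (d1-v)) <;> linarith [sub_eq_zero.mp this]
        linarith
      rcases le_or_gt u L1 with h2|h2
      · rw [hγ] at heq
        simp only [if_pos h2, if_neg (not_le.mpr h1)] at heq
        have hs1m : d1 - u ∈ Icc 0 d1 := ⟨by linarith [hts1.1], by linarith [hu.1]⟩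
        have hs2m : ts + (v - L1) ∈ Icc 0 d2 := ⟨by linarith, by linarith [hv.2]⟩
        have e1 : dist x (rpt h x y (d1 - u)) = d1 - u := dist_rpt_left h hs1m
        have e2 : dist x (rpt h x z (ts + (v - L1))) = ts + (v - L1) := dist_rpt_left h hs2m
        have heqp : d1 - u = ts + (v - L1) := by rw [← e1, ← e2, heq]
        refine nomore (d1 - u) (by linarith) (le_min (by linarith [hu.1]) (by
          rw [heqp]; linarith [hv.2])) ?_
        rw [heq, heqp]
      · rw [hγ] at heq
        simp only [if_neg (not_le.mpr h2), if_neg (not_le.mpr h1)] at heq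
        have hu2 : ts + (u - L1) ∈ Icc 0 d2 := ⟨by linarith, by linarith [hu.2]⟩
        have hv2 : ts + (v - L1) ∈ Icc 0 d2 := ⟨by linarith, by linarith [hv.2]⟩
        have hdd := rpt_dist h hu2 hv2
        rw [heq, dist_self] at hdd
        have := abs_eq_zero.mp hdd.symm
        have : u = v := by
          cases abs_cases ((ts + (u - L1)) - (ts + (v - L1))) <;> linarith [sub_eq_zero.mp this]
        linarith
    intro u hu v hv huv
    by_contra hne
    rcases lt_trichotomy u v with hlt|heqq|hlt
    · exact key u hu v hv hlt huv
    · exact hne heqq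
    · exact key v hv u hu hlt huv.symm
  have harc : IsArcIn y z (γ '' Icc 0 L) :=
    ⟨0, L, by linarith, γ, hcont.continuousOn, hinj, rfl, hγ0, hγL⟩
  obtain ⟨a, b, hab, δ, hδ, him, hda, hdb⟩ := (h y z).2 _ harc
  have hyzd : dist y z = b - a := by
    have := hδ a ⟨le_refl a, hab⟩ b ⟨hab, le_refl b⟩
    rw [hda, hdb] at this
    rw [this, abs_of_nonpos (by linarith), neg_sub]
  have hcmem : c ∈ δ '' Icc a b := by
    rw [him]
    refine ⟨L1, ⟨hL10, by linarith⟩, ?_⟩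
    rw [hγ]
    simp only [if_pos (le_refl L1)]
    have e : d1 - L1 = ts := by simp [hL1]
    rw [e]
  obtain ⟨u, hu, hdu⟩ := hcmem
  have e1 : dist y c = u - a := by
    rw [← hda, ← hdu, hδ a ⟨le_refl a, hab⟩ u hu, abs_of_nonpos (by linarith [hu.1]), neg_sub]
  have e2 : dist c z = b - u := by
    rw [← hdb, ← hdu, hδ u hu b ⟨hab, le_refl b⟩, abs_of_nonpos (by linarith [hu.2]), neg_sub]
  have e3 : dist y c = L1 := by
    rw [hc, dist_comm]
    exact dist_rpt_right h hts1
  have e4 : dist c z = L2 := by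
    rw [← hceq]
    exact dist_rpt_right h hts2
  have hyzL : dist y z = L1 + L2 := by rw [hyzd]; linarith
  have hg : ts = gromovProd x y z := by
    simp only [gromovProd, ← hd1, ← hd2]
    rw [hyzL]
    simp only [hL1, hL2]
    ring
  refine ⟨by rw [← hg]; exact hts0, by rw [← hg]; exact hts1.2,
    by rw [← hg]; exact hts2.2, ?_⟩
  rw [← hg]
  exact htsA.2


lemma pt_agree (x y z : T) {r : ℝ} (hr0 : 0 ≤ r) (hrg : r ≤ gromovProd x y z) :
    rpt h x y r = rpt h x z r := by
  obtain ⟨hg0, hgy, hgz, hcc⟩ := tripod h x y z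
  set g := gromovProd x y z with hgdef
  set c := rpt h x y g with hc
  have hxc : dist x c = g := dist_rpt_left h ⟨hg0, hgy⟩
  have hcy : dist c y = dist x y - g := dist_rpt_right h ⟨hg0, hgy⟩
  have hcz : dist c z = dist x z - g := by rw [hcc]; exact dist_rpt_right h ⟨hg0, hgz⟩
  have e1 : rpt h x y r = rpt h x c r :=
    pt_sub h (by rw [hxc]; linarith) ⟨hr0, by rw [hxc]; exact hrg⟩
  have e2 : rpt h x z r = rpt h x c r :=
    pt_sub h (by rw [hxc]; linarith) ⟨hr0, by rw [hxc]; exact hrg⟩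
  rw [e1, e2]

lemma le_gromov_of_agree {x y z : T} {r : ℝ} (hry : r ∈ Icc 0 (dist x y))
    (hrz : r ≤ dist x z) (hagree : rpt h x y r = rpt h x z r) :
    r ≤ gromovProd x y z := by
  set c := rpt h x y r with hc
  have h1 : dist c y = dist x y - r := dist_rpt_right h hry
  have h2 : dist c z = dist x z - r := by
    rw [hagree]; exact dist_rpt_right h ⟨hry.1, hrz⟩
  have h3 : dist y z ≤ dist y c + dist c z := dist_triangle _ _ _
  rw [dist_comm y c, h1, h2] at h3
  simp only [gromovProd]
  linarith

lemma dist_rpt_rpt (x y z : T) {s t : ℝ} (hs : s ∈ Icc (gromovProd x y z) (dist x y))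
    (ht : t ∈ Icc (gromovProd x y z) (dist x z)) :
    dist (rpt h x y s) (rpt h x z t) = s + t - 2 * gromovProd x y z := by
  obtain ⟨hg0, hgy, hgz, hcc⟩ := tripod h x y z
  set g := gromovProd x y z with hgdef
  set c := rpt h x y g with hc
  have hsm : s ∈ Icc 0 (dist x y) := ⟨le_trans hg0 hs.1, hs.2⟩
  have htm : t ∈ Icc 0 (dist x z) := ⟨le_trans hg0 ht.1, ht.2⟩
  have e1 : dist (rpt h x y s) c = s - g := by
    rw [hc, rpt_dist h hsm ⟨hg0, hgy⟩, abs_of_nonneg (by linarith [hs.1])]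
  have e2 : dist c (rpt h x z t) = t - g := by
    rw [hcc, rpt_dist h ⟨hg0, hgz⟩ htm, abs_of_nonpos (by linarith [ht.1]), neg_sub]
  have hub : dist (rpt h x y s) (rpt h x z t) ≤ s + t - 2 * g := by
    calc dist (rpt h x y s) (rpt h x z t)
        ≤ dist (rpt h x y s) c + dist c (rpt h x z t) := dist_triangle _ _ _
    _ = s + t - 2 * g := by rw [e1, e2]; ring
  have hyz : dist y z = dist x y + dist x z - 2 * g := by
    simp only [hgdef, gromovProd]; ring
  have hlb : s + t - 2 * g ≤ dist (rpt h x y s) (rpt h x z t) := by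
    have t1 : dist y z ≤ dist y (rpt h x y s) + dist (rpt h x y s) (rpt h x z t)
        + dist (rpt h x z t) z := dist_triangle4 _ _ _ _
    rw [dist_comm y (rpt h x y s), dist_rpt_right h hsm, dist_rpt_right h htm, hyz] at t1
    linarith
  linarith

include h in
/-- concatenating alignments -/
lemma align3 {x y z w : T} (h1 : dist x y + dist y z = dist x z)
    (h2 : dist y z + dist z w = dist y w) (hne : y ≠ z) :
    dist x w = dist x y + dist y w := by
  have hyz : 0 < dist y z := dist_pos.mpr hne
  set g := gromovProd z x w with hg
  have hg0 : 0 ≤ g := (tripod h z x w).1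
  have hgle : g ≤ 0 := by
    by_contra hpos
    push_neg at hpos
    set r := min g (dist y z) with hr
    have hr0 : 0 < r := lt_min hpos hyz
    have e1 : rpt h z x r = rpt h z w r := pt_agree h z x w (le_of_lt hr0) (min_le_left _ _)
    have hbzyx : dist z y + dist y x = dist z x := by
      rw [dist_comm z y, dist_comm y x, dist_comm z x]; linarith
    have e2 : rpt h z x r = rpt h z y r :=
      pt_sub h hbzyx ⟨le_of_lt hr0, by rw [dist_comm z y, hr]; exact min_le_right _ _⟩
    have e3 : rpt h z y r = rpt h z w r := by rw [← e2, e1]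
    have hg2 : gromovProd z y w = 0 := by
      simp only [gromovProd]
      rw [dist_comm z y]
      linarith
    have hrw : r ≤ dist z w := le_trans (min_le_left _ _) (tripod h z x w).2.2.1
    have hrzy : r ∈ Icc 0 (dist z y) := ⟨le_of_lt hr0, by rw [dist_comm, hr]; exact min_le_right _ _⟩
    have := le_gromov_of_agree h hrzy hrw e3
    rw [hg2] at this
    linarith
  have hgz : g = 0 := le_antisymm hgle hg0
  have : dist z x + dist z w - dist x w = 0 := by
    have := hgz
    simp only [hg, gromovProd] at this
    linarith
  rw [dist_comm z x] at this
  linarith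

/-- isometries transport standard geodesics -/
lemma rpt_map {f : T → T} (hf : ∀ a b, dist (f a) (f b) = dist a b) {x y : T} {t : ℝ}
    (ht : t ∈ Icc 0 (dist x y)) :
    f (rpt h x y t) = rpt h (f x) (f y) t := by
  have e1 : dist (f x) (f (rpt h x y t)) = t := by rw [hf]; exact dist_rpt_left h ht
  have e2 : dist (f (rpt h x y t)) (f y) = dist x y - t := by
    rw [hf]; exact dist_rpt_right h ht
  have hb : dist (f x) (f (rpt h x y t)) + dist (f (rpt h x y t)) (f y) = dist (f x) (f y) := by
    rw [e1, e2, hf]; ring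
  have := between_pt h hb
  rw [e1] at this
  exact this.symm

include h in
/-- the hyperbolicity criterion: a point moved by `k` and aligned with its iterates
realizes the translation length -/
lemma transLen_eq {χ : T → T} (hχ : ∀ a b, dist (χ a) (χ b) = dist a b) {x : T}
    (hpos : 0 < dist x (χ x)) (halign : gromovProd (χ x) x (χ (χ x)) = 0) :
    translationLength χ = dist x (χ x) := by
  set k := dist x (χ x) with hk
  have hiter : ∀ n : ℕ, ∀ a b : T, dist (χ^[n] a) (χ^[n] b) = dist a b := by
    intro n
    induction n with
    | zero => intro a b; simp
    | succ n ih =>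
      intro a b
      rw [Function.iterate_succ_apply, Function.iterate_succ_apply, ih, hχ]
  have h2k : dist x (χ (χ x)) = 2 * k := by
    have h1 : dist (χ x) x = k := by rw [dist_comm]
    have h2 : dist (χ x) (χ (χ x)) = k := hχ x (χ x)
    simp only [gromovProd, h1, h2] at halign
    linarith
  have main : ∀ n : ℕ, dist x (χ^[n] x) = n * k ∧ dist x (χ^[n+1] x) = (n+1) * k := by
    intro n
    induction n with
    | zero => exact ⟨by simp, by simpa using hk.symm⟩
    | succ n ih =>
      have hyz : dist (χ^[n] x) (χ^[n+1] x) = k := by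
        rw [Function.iterate_succ_apply χ n x, hiter]
      have e2 : χ^[n+1+1] x = χ^[n] (χ (χ x)) := by
        rw [show n+1+1 = n+2 from rfl, Function.iterate_add_apply χ n 2]
        simp [Function.iterate_succ_apply']
      have hzw : dist (χ^[n] x) (χ^[n+1+1] x) = 2*k := by
        rw [e2, hiter, h2k]
      have hzw2 : dist (χ^[n+1] x) (χ^[n+1+1] x) = k := by
        rw [Function.iterate_succ_apply χ (n+1) x, hiter]
      have h1 : dist x (χ^[n] x) + dist (χ^[n] x) (χ^[n+1] x) = dist x (χ^[n+1] x) := by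
        rw [ih.1, ih.2, hyz]; ring
      have h2 : dist (χ^[n] x) (χ^[n+1] x) + dist (χ^[n+1] x) (χ^[n+1+1] x)
          = dist (χ^[n] x) (χ^[n+1+1] x) := by
        rw [hyz, hzw2, hzw]; ring
      have hne : χ^[n] x ≠ χ^[n+1] x := by
        intro he
        rw [he, dist_self] at hyz
        linarith
      have halg := align3 h h1 h2 hne
      refine ⟨by rw [ih.2]; push_cast; ring, ?_⟩
      rw [halg, ih.1, hzw]
      push_cast
      ring
  have tele : ∀ (y : T) (n : ℕ), dist y (χ^[n] y) ≤ n * dist y (χ y) := by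
    intro y n
    induction n with
    | zero => simp
    | succ n ih =>
      have e : χ^[n+1] y = χ^[n] (χ y) := Function.iterate_succ_apply χ n y
      calc dist y (χ^[n+1] y)
          ≤ dist y (χ^[n] y) + dist (χ^[n] y) (χ^[n+1] y) := dist_triangle _ _ _
      _ ≤ n * dist y (χ y) + dist y (χ y) := by
          rw [e, hiter]
          linarith
      _ = (n+1 : ℕ) * dist y (χ y) := by push_cast; ring
  have lower : ∀ y : T, k ≤ dist y (χ y) := by
    intro y
    by_contra hlt
    push_neg at hlt
    have hbound : ∀ n : ℕ, (n : ℝ) * k ≤ 2 * dist x y + n * dist y (χ y) := by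
      intro n
      have t1 : dist x (χ^[n] x) ≤ dist x y + dist y (χ^[n] y) + dist (χ^[n] y) (χ^[n] x) :=
        dist_triangle4 _ _ _ _
      rw [(main n).1, hiter, dist_comm y x] at t1
      have := tele y n
      linarith
    set ε := k - dist y (χ y) with hε
    have hε0 : 0 < ε := by rw [hε]; linarith
    obtain ⟨n, hn⟩ := exists_nat_gt (2 * dist x y / ε)
    have hb := hbound n
    have h2 : 2 * dist x y < n * ε := by
      rw [div_lt_iff₀ hε0] at hn
      linarith
    have h3 : (n:ℝ) * ε = n * k - n * dist y (χ y) := by rw [hε]; ring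
    linarith
  have hne : Nonempty T := ⟨x⟩
  refine le_antisymm ?_ (le_ciInf lower)
  have hbdd : BddBelow (Set.range fun z : T => dist z (χ z)) :=
    ⟨0, by rintro r ⟨z, rfl⟩; exact dist_nonneg⟩
  exact ciInf_le hbdd x


include h in
/-- an elliptic isometry of an ℝ-tree has a fixed point -/
lemma exists_fixed [Nonempty T] (φ : T ≃ᵢ T) (hφ : translationLength (⇑φ) = 0) :
    ∃ p : T, φ p = p := by
  by_contra hno
  push_neg at hno
  set x := Classical.arbitrary T with hxdef
  have hdφ : ∀ a b : T, dist (φ a) (φ b) = dist a b := fun a b => φ.dist_eq a b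
  have hd0 : 0 < dist x (φ x) := dist_pos.mpr (fun he => hno x he.symm)
  obtain ⟨hg0, hgy, hgz, hccc⟩ := tripod h (φ x) x (φ (φ x))
  set d := dist x (φ x) with hd
  set g := gromovProd (φ x) x (φ (φ x)) with hg
  have hdyx : dist (φ x) x = d := by rw [dist_comm]
  have hdzz : dist (φ x) (φ (φ x)) = d := hdφ x (φ x)
  rw [hdyx] at hgy
  rw [hdzz] at hgz
  set m := rpt h x (φ x) (d/2) with hmdef
  have hdm : d/2 ∈ Icc 0 (dist x (φ x)) := ⟨by linarith, by rw [← hd]; linarith⟩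
  have hφm : φ m = rpt h (φ x) (φ (φ x)) (d/2) := rpt_map h hdφ hdm
  have hm' : m = rpt h (φ x) x (d/2) := by
    rw [hmdef, pt_rev h hdm, ← hd]
    congr 1
    ring
  by_cases hc2 : d ≤ 2 * g
  · -- the midpoint is fixed
    have h3 : rpt h (φ x) x (d/2) = rpt h (φ x) (φ (φ x)) (d/2) :=
      pt_agree h _ _ _ (by linarith) (by rw [← hg]; linarith)
    exact hno m (by rw [hφm, ← h3, ← hm'])
  · push_neg at hc2
    set c := rpt h (φ x) x g with hcdef
    have hgmem1 : g ∈ Icc 0 (dist (φ x) x) := ⟨hg0, by rw [hdyx]; linarith⟩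
    have hgmem2 : g ∈ Icc 0 (dist (φ x) (φ (φ x))) := ⟨hg0, by rw [hdzz]; linarith⟩
    have hA1 : dist m (φ m) = d - 2*g := by
      rw [hφm, hm']
      have := dist_rpt_rpt h (φ x) x (φ (φ x)) (s := d/2) (t := d/2)
        ⟨by rw [← hg]; linarith, by rw [hdyx]; linarith⟩
        ⟨by rw [← hg]; linarith, by rw [hdzz]; linarith⟩
      rw [← hg] at this
      rw [this]
      ring
    have hA2 : φ c = rpt h (φ x) (φ (φ x)) (d - g) := by
      have e1 : φ c = rpt h (φ (φ x)) (φ x) g := by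
        rw [hcdef]
        exact rpt_map h hdφ hgmem1
      have hdrev : dist (φ (φ x)) (φ x) = d := by rw [dist_comm, hdzz]
      rw [e1, pt_rev h (⟨hg0, by rw [hdrev]; linarith⟩ : g ∈ Icc 0 (dist (φ (φ x)) (φ x))),
        hdrev]
    have hA3 : dist c (φ c) = d - 2*g := by
      rw [hA2, hccc, rpt_dist h hgmem2 ⟨by linarith, by rw [hdzz]; linarith⟩,
        abs_of_nonpos (by linarith), neg_sub]
      ring
    have hA4 : dist m (φ c) = (d/2 - g) + (d - 2*g) := by
      rw [hm', hA2]
      have := dist_rpt_rpt h (φ x) x (φ (φ x)) (s := d/2) (t := d - g)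
        ⟨by rw [← hg]; linarith, by rw [hdyx]; linarith⟩
        ⟨by rw [← hg]; linarith, by rw [hdzz]; linarith⟩
      rw [← hg] at this
      rw [this]
      ring
    have hA5 : dist m c = d/2 - g := by
      rw [hm', hcdef, rpt_dist h ⟨by linarith, by rw [hdyx]; linarith⟩ hgmem1,
        abs_of_nonneg (by linarith)]
    have hA6 : dist (φ c) (φ (φ m)) = d/2 - g := by
      rw [hdφ, hccc, hφm, rpt_dist h hgmem2 ⟨by linarith, by rw [hdzz]; linarith⟩,
        abs_of_nonpos (by linarith), neg_sub]
    have hsymm : ∀ a b : T, dist (φ.symm a) (φ.symm b) = dist a b :=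
      fun a b => φ.symm.dist_eq a b
    have hA7 : dist c (φ (φ m)) = (d - 2*g) + (d/2 - g) := by
      have e1 : φ.symm c = rpt h x (φ x) g := by
        rw [hccc, rpt_map h hsymm hgmem2]
        simp
      have e2 : rpt h x (φ x) g = rpt h (φ x) x (d - g) := by
        rw [pt_rev h (⟨hg0, by rw [← hd]; linarith⟩ : g ∈ Icc 0 (dist x (φ x))), ← hd]
      have e3 : dist c (φ (φ m)) = dist (φ.symm c) (φ m) := by
        rw [← hsymm c (φ (φ m)), φ.symm_apply_apply]
      rw [e3, e1, e2, hφm]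
      have := dist_rpt_rpt h (φ x) x (φ (φ x)) (s := d - g) (t := d/2)
        ⟨by rw [← hg]; linarith, by rw [hdyx]; linarith⟩
        ⟨by rw [← hg]; linarith, by rw [hdzz]; linarith⟩
      rw [← hg] at this
      rw [this]
      ring
    have hh1 : dist m c + dist c (φ c) = dist m (φ c) := by
      rw [hA5, hA3, hA4]
    have hh2 : dist c (φ c) + dist (φ c) (φ (φ m)) = dist c (φ (φ m)) := by
      rw [hA3, hA6, hA7]
    have hhne : c ≠ φ c := by
      intro he
      rw [← he, dist_self] at hA3
      linarith
    have halg := align3 h hh1 hh2 hhne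
    have hA9 : dist (φ m) (φ (φ m)) = d - 2*g := by rw [hdφ, hA1]
    have halign : gromovProd (φ m) m (φ (φ m)) = 0 := by
      simp only [gromovProd]
      rw [dist_comm (φ m) m, hA1, hA9, halg, hA5, hA7]
      ring
    have htl := transLen_eq h hdφ (by rw [hA1]; linarith) halign
    rw [hφ, hA1] at htl
    linarith

end RTreeAux

open Set RTreeAux in
/-- If `φ` and `ψ` are elliptic isometries of an ℝ-tree with disjoint fixed-point sets,
then `ψ ∘ φ` is hyperbolic, and `ℓ(ψ ∘ φ) = 2 D`, where `D` is the distance between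
`Fix(φ)` and `Fix(ψ)`. -/
theorem comp_of_elliptic_disjoint_fix {T : Type*} [MetricSpace T] [Nonempty T]
    (h : IsRTree T) (φ ψ : T ≃ᵢ T)
    (hφ : translationLength (⇑φ) = 0) (hψ : translationLength (⇑ψ) = 0)
    (hdisj : Disjoint {x : T | φ x = x} {x : T | ψ x = x}) :
    0 < translationLength (fun x : T => ψ (φ x)) ∧
    translationLength (fun x : T => ψ (φ x)) =
      2 * sInf {r : ℝ | ∃ x ∈ {x : T | φ x = x}, ∃ y ∈ {x : T | ψ x = x}, r = dist x y} := by
  classical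
  obtain ⟨p₀, hp₀⟩ := exists_fixed h φ hφ
  obtain ⟨q₀, hq₀⟩ := exists_fixed h ψ hψ
  have hφd : ∀ a b : T, dist (φ a) (φ b) = dist a b := fun a b => φ.dist_eq a b
  have hψd : ∀ a b : T, dist (ψ a) (ψ b) = dist a b := fun a b => ψ.dist_eq a b
  have hχd : ∀ a b : T, dist (ψ (φ a)) (ψ (φ b)) = dist a b := by
    intro a b; rw [hψd, hφd]
  have hconv : ∀ (f : T ≃ᵢ T) (a b : T), f a = a → f b = b →
      ∀ t ∈ Icc (0:ℝ) (dist a b), f (rpt h a b t) = rpt h a b t := by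
    intro f a b ha hb t ht
    rw [rpt_map h (fun u v => f.dist_eq u v) ht, ha, hb]
  set A : Set ℝ := Icc 0 (dist p₀ q₀) ∩ {t | φ (rpt h p₀ q₀ t) = rpt h p₀ q₀ t} with hA
  set B : Set ℝ := Icc 0 (dist p₀ q₀) ∩ {t | ψ (rpt h p₀ q₀ t) = rpt h p₀ q₀ t} with hB
  have hAclosed : IsClosed A := isClosed_Icc.inter
    (isClosed_eq (φ.continuous.comp (rpt_continuous h p₀ q₀)) (rpt_continuous h p₀ q₀))
  have hBclosed : IsClosed B := isClosed_Icc.inter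
    (isClosed_eq (ψ.continuous.comp (rpt_continuous h p₀ q₀)) (rpt_continuous h p₀ q₀))
  have hAne : A.Nonempty :=
    ⟨0, ⟨le_refl 0, dist_nonneg⟩, by show φ (rpt h p₀ q₀ 0) = _; rw [rpt_zero h p₀ q₀, hp₀]⟩
  have hBne : B.Nonempty :=
    ⟨dist p₀ q₀, ⟨dist_nonneg, le_refl _⟩,
      by show ψ (rpt h p₀ q₀ (dist p₀ q₀)) = _; rw [rpt_last h p₀ q₀, hq₀]⟩
  have hAbdd : BddAbove A := ⟨dist p₀ q₀, fun t ht => ht.1.2⟩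
  have hBbdd : BddBelow B := ⟨0, fun t ht => ht.1.1⟩
  have ht₁A : sSup A ∈ A := hAclosed.csSup_mem hAne hAbdd
  have ht₂B : sInf B ∈ B := hBclosed.csInf_mem hBne hBbdd
  set t₁ := sSup A with ht₁def
  set t₂ := sInf B with ht₂def
  have ht₁I : t₁ ∈ Icc 0 (dist p₀ q₀) := ht₁A.1
  have ht₂I : t₂ ∈ Icc 0 (dist p₀ q₀) := ht₂B.1
  set p := rpt h p₀ q₀ t₁ with hpdef
  set q := rpt h p₀ q₀ t₂ with hqdef
  have hpP : φ p = p := ht₁A.2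
  have hqQ : ψ q = q := ht₂B.2
  have hd1 : dist p₀ p = t₁ := dist_rpt_left h ht₁I
  have hd2 : dist p q₀ = dist p₀ q₀ - t₁ := dist_rpt_right h ht₁I
  have hd3 : dist p₀ q = t₂ := dist_rpt_left h ht₂I
  have hd4 : dist q q₀ = dist p₀ q₀ - t₂ := dist_rpt_right h ht₂I
  -- the two projections are distinct
  have hlt : t₁ < t₂ := by
    by_contra hle
    push_neg at hle
    have hb : dist p₀ p + dist p q₀ = dist p₀ q₀ := by rw [hd1, hd2]; ring
    have hmem : t₂ ∈ Icc 0 (dist p₀ p) := ⟨ht₂I.1, by rw [hd1]; exact hle⟩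
    have hsub : rpt h p₀ q₀ t₂ = rpt h p₀ p t₂ := pt_sub h hb hmem
    have hfix : φ (rpt h p₀ p t₂) = rpt h p₀ p t₂ := hconv φ p₀ p hp₀ hpP t₂ hmem
    rw [← hsub] at hfix
    have hqP : φ q = q := hfix
    exact Set.disjoint_left.mp hdisj hqP hqQ
  have hpq : dist p q = t₂ - t₁ := by
    rw [hpdef, hqdef, rpt_dist h ht₁I ht₂I, abs_of_nonpos (by linarith), neg_sub]
  have hqp : dist q p = t₂ - t₁ := by rw [dist_comm]; exact hpq
  -- subsegment identifications
  have hsubpq : ∀ r ∈ Icc (0:ℝ) (t₂ - t₁), rpt h p q r = rpt h p₀ q₀ (t₁ + r) := by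
    intro r hr
    have hmem : t₁ + r ∈ Icc 0 (dist p₀ q₀) := ⟨by linarith [ht₁I.1, hr.1],
      by linarith [hr.2, ht₂I.2]⟩
    have hw1 : dist p (rpt h p₀ q₀ (t₁ + r)) = r := by
      rw [hpdef, rpt_dist h ht₁I hmem, abs_of_nonpos (by linarith [hr.1]), neg_sub]
      ring
    have hw2 : dist (rpt h p₀ q₀ (t₁ + r)) q = t₂ - t₁ - r := by
      rw [hqdef, rpt_dist h hmem ht₂I, abs_of_nonpos (by linarith [hr.2]), neg_sub]
      ring
    have hb : dist p (rpt h p₀ q₀ (t₁ + r)) + dist (rpt h p₀ q₀ (t₁ + r)) q = dist p q := by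
      rw [hw1, hw2, hpq]; ring
    have := between_pt h hb
    rw [hw1] at this
    exact this
  have hsubqp : ∀ r ∈ Icc (0:ℝ) (t₂ - t₁), rpt h q p r = rpt h p₀ q₀ (t₂ - r) := by
    intro r hr
    have hmem : t₂ - r ∈ Icc 0 (dist p₀ q₀) := ⟨by linarith [hr.2, ht₁I.1],
      by linarith [hr.1, ht₂I.2]⟩
    have hw1 : dist q (rpt h p₀ q₀ (t₂ - r)) = r := by
      rw [hqdef, rpt_dist h ht₂I hmem, abs_of_nonneg (by linarith [hr.1])]
      ring
    have hw2 : dist (rpt h p₀ q₀ (t₂ - r)) p = t₂ - t₁ - r := by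
      rw [hpdef, rpt_dist h hmem ht₁I, abs_of_nonneg (by linarith [hr.2])]
      ring
    have hb : dist q (rpt h p₀ q₀ (t₂ - r)) + dist (rpt h p₀ q₀ (t₂ - r)) p = dist q p := by
      rw [hw1, hw2, hqp]; ring
    have := between_pt h hb
    rw [hw1] at this
    exact this
  -- the bridge: q is between p and any fixed point of ψ
  have hBQ : ∀ b : T, ψ b = b → dist p b = dist p q + dist q b := by
    intro b hb
    obtain ⟨hg0, hgb, hgp, hcc⟩ := tripod h q b p
    set g := gromovProd q b p with hgdef
    have hgD : g ≤ t₂ - t₁ := by rw [← hqp]; exact hgp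
    have hfix : ψ (rpt h q b g) = rpt h q b g := hconv ψ q b hqQ hb g ⟨hg0, hgb⟩
    have e1 : rpt h q p g = rpt h p₀ q₀ (t₂ - g) := hsubqp g ⟨hg0, hgD⟩
    have hmem : t₂ - g ∈ B := by
      refine ⟨⟨by linarith [ht₁I.1], by linarith [ht₂I.2]⟩, ?_⟩
      show ψ (rpt h p₀ q₀ (t₂ - g)) = rpt h p₀ q₀ (t₂ - g)
      rw [← e1, ← hcc]
      exact hfix
    have := csInf_le hBbdd hmem
    rw [← ht₂def] at this
    have hgz : g = 0 := by linarith
    have h2 : dist q b + dist q p - dist b p = 0 := by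
      have := hgz
      simp only [hgdef, gromovProd] at this
      linarith
    have e1 := dist_comm q p
    have e2 := dist_comm b p
    linarith [e1, e2]
  -- the infimum of distances between the fixed sets is t₂ - t₁
  have hlb : ∀ a b : T, φ a = a → ψ b = b → t₂ - t₁ ≤ dist a b := by
    intro a b ha hb
    have hgle : gromovProd p a b ≤ 0 := by
      by_contra hpos
      push_neg at hpos
      set r := min (gromovProd p a b) (t₂ - t₁) with hrdef
      have hrg : r ≤ gromovProd p a b := min_le_left _ _
      have hrD : r ≤ t₂ - t₁ := min_le_right _ _
      have hr0 : 0 < r := lt_min hpos (by linarith)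
      have e1 : rpt h p a r = rpt h p b r := pt_agree h p a b hr0.le hrg
      have hbq : dist p q + dist q b = dist p b := (hBQ b hb).symm
      have e2 : rpt h p b r = rpt h p q r := pt_sub h hbq ⟨hr0.le, by rw [hpq]; exact hrD⟩
      have e3 : rpt h p q r = rpt h p₀ q₀ (t₁ + r) := hsubpq r ⟨hr0.le, hrD⟩
      have e4 : φ (rpt h p a r) = rpt h p a r :=
        hconv φ p a hpP ha r ⟨hr0.le, le_trans hrg (tripod h p a b).2.1⟩
      have hmem : t₁ + r ∈ A := by
        refine ⟨⟨by linarith [ht₁I.1], by linarith [ht₂I.2]⟩, ?_⟩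
        show φ (rpt h p₀ q₀ (t₁ + r)) = rpt h p₀ q₀ (t₁ + r)
        rw [← e3, ← e2, ← e1]
        exact e4
      have := le_csSup hAbdd hmem
      rw [← ht₁def] at this
      linarith
    have hgeq : gromovProd p a b = 0 := le_antisymm hgle (tripod h p a b).1
    have hab : dist a b = dist p a + dist p b := by
      simp only [gromovProd] at hgeq
      linarith
    have hpb := hBQ b hb
    rw [hpq] at hpb
    have := dist_nonneg (x := p) (y := a)
    have := dist_nonneg (x := q) (y := b)
    linarith
  have hInf : sInf {r : ℝ | ∃ x ∈ {x : T | φ x = x}, ∃ y ∈ {x : T | ψ x = x}, r = dist x y}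
      = t₂ - t₁ := by
    apply le_antisymm
    · exact csInf_le ⟨0, by rintro r ⟨a, -, b, -, rfl⟩; exact dist_nonneg⟩
        ⟨p, hpP, q, hqQ, hpq.symm⟩
    · refine le_csInf ⟨dist p q, p, hpP, q, hqQ, rfl⟩ ?_
      rintro r ⟨a, ha, b, hb, rfl⟩
      exact hlb a b ha hb
  -- reflection lemmas
  have hreflψ : ∀ z : T, dist q z = dist q p + dist p z →
      dist z (ψ z) = dist z q + dist q (ψ z) := by
    intro z hz
    obtain ⟨hg0, hgz', hgψ, hcc⟩ := tripod h q z (ψ z)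
    set g := gromovProd q z (ψ z) with hgdef
    have hψc : ψ (rpt h q z g) = rpt h q z g := by
      rw [rpt_map h hψd ⟨hg0, hgz'⟩, hqQ]
      exact hcc.symm
    have hgle : g ≤ 0 := by
      by_contra hpos
      push_neg at hpos
      set r := min g (t₂ - t₁) with hrdef
      have hrg : r ≤ g := min_le_left _ _
      have hrD : r ≤ t₂ - t₁ := min_le_right _ _
      have hr0 : 0 < r := lt_min hpos (by linarith)
      have hqc : dist q (rpt h q z g) = g := dist_rpt_left h ⟨hg0, hgz'⟩
      have hbc : dist q (rpt h q z g) + dist (rpt h q z g) z = dist q z := by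
        rw [hqc, dist_rpt_right h ⟨hg0, hgz'⟩]; ring
      have e1 : rpt h q z r = rpt h q (rpt h q z g) r :=
        pt_sub h hbc ⟨hr0.le, by rw [hqc]; exact hrg⟩
      have e2 : ψ (rpt h q (rpt h q z g) r) = rpt h q (rpt h q z g) r :=
        hconv ψ q (rpt h q z g) hqQ hψc r ⟨hr0.le, by rw [hqc]; exact hrg⟩
      have e3 : rpt h q z r = rpt h q p r := pt_sub h hz.symm ⟨hr0.le, by rw [hqp]; exact hrD⟩
      have e4 : rpt h q p r = rpt h p₀ q₀ (t₂ - r) := hsubqp r ⟨hr0.le, hrD⟩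
      have hmem : t₂ - r ∈ B := by
        refine ⟨⟨by linarith [ht₁I.1], by linarith [ht₂I.2]⟩, ?_⟩
        show ψ (rpt h p₀ q₀ (t₂ - r)) = rpt h p₀ q₀ (t₂ - r)
        rw [← e4, ← e3, e1]
        exact e2
      have := csInf_le hBbdd hmem
      rw [← ht₂def] at this
      linarith
    have hgeq : g = 0 := le_antisymm hgle hg0
    have : dist q z + dist q (ψ z) - dist z (ψ z) = 0 := by
      have := hgeq
      simp only [hgdef, gromovProd] at this
      linarith
    rw [dist_comm q z] at this
    linarith
  have hreflφ : ∀ z : T, dist p z = dist p q + dist q z →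
      dist z (φ z) = dist z p + dist p (φ z) := by
    intro z hz
    obtain ⟨hg0, hgz', hgφ, hcc⟩ := tripod h p z (φ z)
    set g := gromovProd p z (φ z) with hgdef
    have hφc : φ (rpt h p z g) = rpt h p z g := by
      rw [rpt_map h hφd ⟨hg0, hgz'⟩, hpP]
      exact hcc.symm
    have hgle : g ≤ 0 := by
      by_contra hpos
      push_neg at hpos
      set r := min g (t₂ - t₁) with hrdef
      have hrg : r ≤ g := min_le_left _ _
      have hrD : r ≤ t₂ - t₁ := min_le_right _ _
      have hr0 : 0 < r := lt_min hpos (by linarith)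
      have hpc : dist p (rpt h p z g) = g := dist_rpt_left h ⟨hg0, hgz'⟩
      have hbc : dist p (rpt h p z g) + dist (rpt h p z g) z = dist p z := by
        rw [hpc, dist_rpt_right h ⟨hg0, hgz'⟩]; ring
      have e1 : rpt h p z r = rpt h p (rpt h p z g) r :=
        pt_sub h hbc ⟨hr0.le, by rw [hpc]; exact hrg⟩
      have e2 : φ (rpt h p (rpt h p z g) r) = rpt h p (rpt h p z g) r :=
        hconv φ p (rpt h p z g) hpP hφc r ⟨hr0.le, by rw [hpc]; exact hrg⟩
      have e3 : rpt h p z r = rpt h p q r := pt_sub h hz.symm ⟨hr0.le, by rw [hpq]; exact hrD⟩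
      have e4 : rpt h p q r = rpt h p₀ q₀ (t₁ + r) := hsubpq r ⟨hr0.le, hrD⟩
      have hmem : t₁ + r ∈ A := by
        refine ⟨⟨by linarith [ht₁I.1], by linarith [ht₂I.2]⟩, ?_⟩
        show φ (rpt h p₀ q₀ (t₁ + r)) = rpt h p₀ q₀ (t₁ + r)
        rw [← e4, ← e3, e1]
        exact e2
      have := le_csSup hAbdd hmem
      rw [← ht₁def] at this
      linarith
    have hgeq : g = 0 := le_antisymm hgle hg0
    have : dist p z + dist p (φ z) - dist z (φ z) = 0 := by
      have := hgeq
      simp only [hgdef, gromovProd] at this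
      linarith
    rw [dist_comm p z] at this
    linarith
  -- orbit computations
  have r1 := hreflψ p (by rw [dist_self, add_zero])
  have hqψp : dist q (ψ p) = t₂ - t₁ := by
    calc dist q (ψ p) = dist (ψ q) (ψ p) := by rw [hqQ]
    _ = dist q p := hψd _ _
    _ = t₂ - t₁ := hqp
  have c1 : dist p (ψ p) = 2 * (t₂ - t₁) := by
    rw [r1, hpq, hqψp]
    ring
  have r2 := hreflφ (ψ p) (by rw [hpq, hqψp, c1]; ring)
  have hpφψp : dist p (φ (ψ p)) = 2 * (t₂ - t₁) := by
    calc dist p (φ (ψ p)) = dist (φ p) (φ (ψ p)) := by rw [hpP]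
    _ = dist p (ψ p) := hφd _ _
    _ = 2 * (t₂ - t₁) := c1
  have c2 : dist (ψ p) (φ (ψ p)) = 4 * (t₂ - t₁) := by
    rw [r2, dist_comm (ψ p) p, c1, hpφψp]
    ring
  have hbq1 : dist (ψ p) q + dist q p = dist (ψ p) p := by
    rw [dist_comm (ψ p) q, hqψp, hqp, dist_comm (ψ p) p, c1]
    ring
  have hq_on : rpt h (ψ p) p (t₂ - t₁) = q := by
    have := between_pt h hbq1
    rwa [dist_comm (ψ p) q, hqψp] at this
  have hbp2 : dist (ψ p) p + dist p (φ (ψ p)) = dist (ψ p) (φ (ψ p)) := by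
    rw [dist_comm (ψ p) p, c1, hpφψp, c2]
    ring
  have e5 : rpt h (ψ p) (φ (ψ p)) (t₂ - t₁) = rpt h (ψ p) p (t₂ - t₁) :=
    pt_sub h hbp2 ⟨by linarith, by rw [dist_comm (ψ p) p, c1]; linarith⟩
  have hq3 : dist q (φ (ψ p)) = 3 * (t₂ - t₁) := by
    have hmem : (t₂ - t₁) ∈ Icc 0 (dist (ψ p) (φ (ψ p))) := ⟨by linarith, by rw [c2]; linarith⟩
    have := dist_rpt_right h hmem
    rw [e5, hq_on, c2] at this
    rw [this]
    ring
  have hqχ2 : dist q (ψ (φ (ψ p))) = 3 * (t₂ - t₁) := by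
    calc dist q (ψ (φ (ψ p))) = dist (ψ q) (ψ (φ (ψ p))) := by rw [hqQ]
    _ = dist q (φ (ψ p)) := hψd _ _
    _ = 3 * (t₂ - t₁) := hq3
  have hψpχ2 : dist (ψ p) (ψ (φ (ψ p))) = 2 * (t₂ - t₁) := by
    rw [hψd]
    exact hpφψp
  have hh1 : dist p q + dist q (ψ p) = dist p (ψ p) := by
    rw [hpq, hqψp, c1]
    ring
  have hh2 : dist q (ψ p) + dist (ψ p) (ψ (φ (ψ p))) = dist q (ψ (φ (ψ p))) := by
    rw [hqψp, hψpχ2, hqχ2]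
    ring
  have hqne : q ≠ ψ p := by
    intro he
    rw [← he, dist_self] at hqψp
    linarith
  have c4 : dist p (ψ (φ (ψ p))) = 4 * (t₂ - t₁) := by
    rw [align3 h hh1 hh2 hqne, hpq, hqχ2]
    ring
  have halign : gromovProd (ψ (φ p)) p (ψ (φ (ψ (φ p)))) = 0 := by
    rw [hpP]
    simp only [gromovProd]
    rw [dist_comm (ψ p) p, c1, hψpχ2, c4]
    ring
  have hpos : 0 < dist p (ψ (φ p)) := by
    rw [hpP, c1]
    linarith
  have htl := transLen_eq h (χ := fun x : T => ψ (φ x)) hχd hpos halign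
  constructor
  · rw [htl]
    exact hpos
  · rw [htl, hInf]
    show dist p (ψ (φ p)) = 2 * (t₂ - t₁)
    rw [hpP, c1]
end
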